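/- arXiv:2205.11924 — 4 statements merged into one kernel-verified Lean document; each statement's English description precedes it below -/
import Mathlib

section
/- Let G be a finitely generated virtually nilpotent group that is not virtually abelian. Then G has a Schreier growth gap n⁴: for every faithful G-set X there exists a constant C ≥ 1 such that n⁴ ≤ C · vol_{G,X}(C·n) for all n ≥ 1. -/
/-- The ball of radius `n` in `G` w.r.t. `S`: products of at most `n` elements of `S`. -/
def wordBall {G : Type*} [Group G] (S : Set G) (n : ℕ) : Set G :=
  {g | ∃ l : List G, l.length ≤ n ∧ (∀ s ∈ l, s ∈ S) ∧ l.prod = g}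

/-- The growth function of the action of `G` on `X`, relative to the generating set `S`:
`vol_{G,X}(n)` is the maximal cardinality of a ball of radius `n` in the Schreier graph. -/
noncomputable def actionGrowth (G : Type*) [Group G] (X : Type*) [MulAction G X]
    (S : Set G) (n : ℕ) : ℕ :=
  ⨆ x : X, Set.ncard ((fun g : G => g • x) '' wordBall S n)

/-- `G` has a Schreier growth gap `f` if for every finite symmetric generating set `S` and every
faithful nonempty `G`-set `X` there is `C ≥ 1` with `f n ≤ C * vol_{G,X}(C * n)` for `n ≥ 1`. -/
def SchreierGrowthGap (G : Type*) [Group G] (f : ℕ → ℝ) : Prop :=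
  ∀ (S : Set G), S.Finite → (∀ s ∈ S, s⁻¹ ∈ S) → Subgroup.closure S = ⊤ →
    ∀ (X : Type*) [MulAction G X] [Nonempty X] [FaithfulSMul G X],
      ∃ C : ℕ, 1 ≤ C ∧ ∀ n : ℕ, 1 ≤ n →
        f n ≤ (C : ℝ) * (actionGrowth G X S (C * n) : ℝ)

/-- `G` is virtually abelian. -/
def VirtuallyAbelian (G : Type*) [Group G] : Prop :=
  ∃ H : Subgroup G, H.FiniteIndex ∧ ∀ a b : ↥H, a * b = b * a

/-- `G` is virtually nilpotent. -/
def VirtuallyNilpotent (G : Type*) [Group G] : Prop :=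
  ∃ H : Subgroup G, H.FiniteIndex ∧ Group.IsNilpotent ↥H

/-!
A finitely generated nilpotent group that is not virtually abelian contains `a`, `b` whose
commutator `z` commutes with `a` and `b` and has infinite order. This is proved by induction through
`G ⧸ center G`: if that quotient is virtually abelian, a finite-index subgroup has central
commutators, and if these all have finite order its centre has finite index.

In a faithful action some point `x` is moved by every `z ^ k` with `0 < |k| ≤ 20 n⁵`. Since
`⁅z ^ t * a ^ i, z ^ s * b ^ j⁆ = z ^ (i * j)`, either no `z ^ t * a ^ i` or no `z ^ t * b ^ j`
with `0 < |i|, |j| < n` fixes `x`; say the former. Replacing `x` by `a ^ α • x` adds `-α Q` to the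
`z`-exponent of `z ^ E * a ^ P * b ^ Q`, and a pigeonhole choice of `α` then makes the `n⁴`
elements `z ^ k * a ^ i * b ^ j` (`k < n²`, `i, j < n`) send `x` to distinct points. As
`z ^ k = ⁅a ^ (k / n), b ^ n⁆ * ⁅a, b ^ (k % n)⁆`, they lie in a ball of radius `O(n)`.
-/

open scoped commutatorElement

section WordBall

variable {G : Type*} [Group G] {S : Set G}

theorem one_mem_wordBall (S : Set G) (n : ℕ) : (1 : G) ∈ wordBall S n :=
  ⟨[], by simp, by simp, rfl⟩

theorem wordBall_mono {m n : ℕ} (h : m ≤ n) : wordBall S m ⊆ wordBall S n := by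
  rintro g ⟨l, hl, hS, rfl⟩
  exact ⟨l, hl.trans h, hS, rfl⟩

theorem mul_mem_wordBall {g h : G} {m n : ℕ} (hg : g ∈ wordBall S m) (hh : h ∈ wordBall S n) :
    g * h ∈ wordBall S (m + n) := by
  obtain ⟨l, hl, hlS, rfl⟩ := hg
  obtain ⟨l', hl', hlS', rfl⟩ := hh
  refine ⟨l ++ l', by simp only [List.length_append]; omega, ?_, List.prod_append⟩
  simpa only [List.mem_append, or_imp, forall_and] using ⟨hlS, hlS'⟩

theorem inv_mem_wordBall (hsym : ∀ s ∈ S, s⁻¹ ∈ S) {g : G} {n : ℕ} (hg : g ∈ wordBall S n) :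
    g⁻¹ ∈ wordBall S n := by
  obtain ⟨l, hl, hlS, rfl⟩ := hg
  refine ⟨(l.map (·⁻¹)).reverse, by simpa using hl, ?_, (List.prod_inv_reverse l).symm⟩
  simpa using fun s hs => inv_inv s ▸ hsym s⁻¹ (hlS s⁻¹ hs)

theorem pow_mem_wordBall {g : G} {n : ℕ} (hg : g ∈ wordBall S n) (k : ℕ) :
    g ^ k ∈ wordBall S (k * n) := by
  induction k with
  | zero => simpa using one_mem_wordBall S 0
  | succ k ih => simpa [pow_succ, add_mul] using mul_mem_wordBall ih hg

theorem pow_mem_wordBall_of_le {g : G} {L k n : ℕ} (hg : g ∈ wordBall S L) (hk : k ≤ n) :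
    g ^ k ∈ wordBall S (n * L) :=
  wordBall_mono (Nat.mul_le_mul_right L hk) (pow_mem_wordBall hg k)

theorem commutatorElement_mem_wordBall (hsym : ∀ s ∈ S, s⁻¹ ∈ S) {g h : G} {n : ℕ}
    (hg : g ∈ wordBall S n) (hh : h ∈ wordBall S n) : ⁅g, h⁆ ∈ wordBall S (4 * n) := by
  rw [commutatorElement_def, show 4 * n = n + n + n + n by ring]
  exact mul_mem_wordBall (mul_mem_wordBall (mul_mem_wordBall hg hh) (inv_mem_wordBall hsym hg))
    (inv_mem_wordBall hsym hh)

theorem finite_wordBall (hS : S.Finite) (n : ℕ) : (wordBall S n).Finite := by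
  have : Finite S := hS.to_subtype
  refine ((List.finite_length_le S n).image fun l => (l.map Subtype.val).prod).subset ?_
  rintro g ⟨l, hl, hlS, rfl⟩
  lift l to List S using hlS
  exact ⟨l, by simpa using hl, rfl⟩

theorem exists_mem_wordBall (hgen : Subgroup.closure S = ⊤) (hsym : ∀ s ∈ S, s⁻¹ ∈ S) (g : G) :
    ∃ n, g ∈ wordBall S n := by
  induction (hgen ▸ Subgroup.mem_top g : g ∈ Subgroup.closure S) using Subgroup.closure_induction
    with
  | mem s hs => exact ⟨1, [s], by simp, by simpa using hs, by simp⟩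
  | one => exact ⟨0, one_mem_wordBall S 0⟩
  | mul g h _ _ hg hh =>
    obtain ⟨m, hg⟩ := hg
    obtain ⟨n, hh⟩ := hh
    exact ⟨m + n, mul_mem_wordBall hg hh⟩
  | inv g _ hg =>
    obtain ⟨n, hg⟩ := hg
    exact ⟨n, inv_mem_wordBall hsym hg⟩

theorem card_le_actionGrowth {X ι : Type*} [MulAction G X] (hS : S.Finite) {F : Finset ι}
    {f : ι → G} {x : X} {n : ℕ} (hf : ∀ t ∈ F, f t ∈ wordBall S n)
    (hinj : Set.InjOn (fun t => f t • x) F) : F.card ≤ actionGrowth G X S n := by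
  classical
  have hbdd : BddAbove (Set.range fun y : X => ((fun g : G => g • y) '' wordBall S n).ncard) :=
    ⟨(wordBall S n).ncard, by
      rintro _ ⟨y, rfl⟩
      exact Set.ncard_image_le (finite_wordBall hS n)⟩
  calc F.card = (F.image fun t => f t • x).card := (Finset.card_image_of_injOn hinj).symm
    _ = (↑(F.image fun t => f t • x) : Set X).ncard := (Set.ncard_coe_finset _).symm
    _ ≤ ((fun g : G => g • x) '' wordBall S n).ncard := by
      refine Set.ncard_le_ncard ?_ ((finite_wordBall hS n).image _)
      intro y hy
      obtain ⟨t, ht, rfl⟩ := Finset.mem_image.mp hy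
      exact ⟨f t, hf t ht, rfl⟩
    _ ≤ actionGrowth G X S n := le_ciSup hbdd x

end WordBall

section Heisenberg

variable {G : Type*} [Group G]

/-- The defining relations of the discrete Heisenberg group. -/
structure IsHeisenbergTriple (a b z : G) : Prop where
  mul_eq : a * b = z * (b * a)
  commute_left : Commute z a
  commute_right : Commute z b

def heisenbergElem (a b z : G) (k i j : ℤ) : G := z ^ k * a ^ i * b ^ j

namespace IsHeisenbergTriple

variable {a b z : G}

theorem of_commute (ha : Commute ⁅a, b⁆ a) (hb : Commute ⁅a, b⁆ b) :
    IsHeisenbergTriple a b ⁅a, b⁆ :=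
  ⟨by rw [commutatorElement_def]; group, ha, hb⟩

theorem of_mem_center (h : ⁅a, b⁆ ∈ Subgroup.center G) : IsHeisenbergTriple a b ⁅a, b⁆ :=
  of_commute (Subgroup.mem_center_iff.mp h a).symm (Subgroup.mem_center_iff.mp h b).symm

variable (h : IsHeisenbergTriple a b z)
include h

theorem commutatorElement_eq : ⁅a, b⁆ = z := by
  rw [commutatorElement_def, h.mul_eq]; group

theorem map {H : Type*} [Group H] (f : G →* H) : IsHeisenbergTriple (f a) (f b) (f z) :=
  ⟨by rw [← map_mul, h.mul_eq, map_mul, map_mul], h.commute_left.map f, h.commute_right.map f⟩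

theorem symm : IsHeisenbergTriple b a z⁻¹ :=
  ⟨by rw [h.mul_eq]; group, h.commute_right.inv_left, h.commute_left.inv_left⟩

theorem zpow_left (p : ℤ) : IsHeisenbergTriple (a ^ p) b (z ^ p) := by
  have hconj : SemiconjBy b (z * a) a := by
    rw [SemiconjBy, h.mul_eq, ← mul_assoc, ← mul_assoc, h.commute_right.eq]
  have := hconj.zpow_right p
  rw [SemiconjBy, h.commute_left.mul_zpow] at this
  refine ⟨?_, h.commute_left.zpow_zpow p p, h.commute_right.zpow_left p⟩
  rw [← this, ← mul_assoc, ← mul_assoc, (h.commute_right.zpow_left p).eq]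

theorem zpow_zpow (p q : ℤ) : IsHeisenbergTriple (a ^ p) (b ^ q) (z ^ (p * q)) := by
  simpa [← zpow_mul, mul_comm q p] using ((h.zpow_left p).symm.zpow_left q).symm

theorem commutatorElement_pow_pow (p q : ℕ) : ⁅a ^ p, b ^ q⁆ = z ^ (p * q) := by
  have := (h.zpow_zpow p q).commutatorElement_eq
  rwa [zpow_natCast, zpow_natCast, ← Nat.cast_mul, zpow_natCast] at this

theorem commute_zpow_left_of_zpow_eq_one {e : ℤ} (he : z ^ e = 1) : Commute (a ^ e) b := by
  have := (h.zpow_left e).mul_eq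
  rwa [he, one_mul] at this

theorem heisenbergElem_mul (k i j k' i' j' : ℤ) :
    heisenbergElem a b z k i j * heisenbergElem a b z k' i' j' =
      heisenbergElem a b z (k + k' - i' * j) (i + i') (j + j') := by
  have hba : b ^ j * a ^ i' = z ^ (-(i' * j)) * (a ^ i' * b ^ j) := by
    rw [(h.zpow_zpow i' j).mul_eq]; group
  have hza (m t : ℤ) : a ^ t * z ^ m = z ^ m * a ^ t := ((h.commute_left.zpow_zpow m t).eq).symm
  have hzb (m t : ℤ) : b ^ t * z ^ m = z ^ m * b ^ t := ((h.commute_right.zpow_zpow m t).eq).symm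
  unfold heisenbergElem
  calc z ^ k * a ^ i * b ^ j * (z ^ k' * a ^ i' * b ^ j')
      = z ^ k * (a ^ i * (b ^ j * z ^ k')) * a ^ i' * b ^ j' := by group
    _ = z ^ k * (a ^ i * z ^ k') * (b ^ j * a ^ i') * b ^ j' := by rw [hzb]; group
    _ = z ^ k * z ^ k' * (a ^ i * z ^ (-(i' * j))) * a ^ i' * b ^ j * b ^ j' := by
      rw [hza, hba]; group
    _ = _ := by rw [hza]; group

theorem heisenbergElem_inv (k i j : ℤ) :
    (heisenbergElem a b z k i j)⁻¹ = heisenbergElem a b z (-k - i * j) (-i) (-j) := by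
  refine (eq_inv_of_mul_eq_one_left ?_).symm
  rw [h.heisenbergElem_mul, show -k - i * j + k - i * -j = 0 by ring]
  simp [heisenbergElem]

theorem heisenbergElem_inv_mul (k i j k' i' j' : ℤ) :
    (heisenbergElem a b z k' i' j')⁻¹ * heisenbergElem a b z k i j =
      heisenbergElem a b z (k - k' + (i - i') * j') (i - i') (j - j') := by
  rw [h.heisenbergElem_inv, h.heisenbergElem_mul]
  congr 1 <;> ring

theorem conj_heisenbergElem (α k i j : ℤ) :
    a ^ (-α) * heisenbergElem a b z k i j * a ^ α = heisenbergElem a b z (k - α * j) i j := by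
  have ha (t : ℤ) : a ^ t = heisenbergElem a b z 0 t 0 := by simp [heisenbergElem]
  rw [ha (-α), ha α, h.heisenbergElem_mul, h.heisenbergElem_mul]
  congr 1 <;> ring

end IsHeisenbergTriple

end Heisenberg

section Counting

variable {G : Type*} [Group G]

theorem eq_of_zpow_mul_mem {K : Subgroup G} {z c : G} {n : ℕ}
    (hz : ∀ k : ℤ, k ≠ 0 → |k| ≤ 20 * n ^ 5 → z ^ k ∉ K) {q E E' : ℤ} {m m' : ℕ}
    (hq : q ≠ 0) (hqn : |q| < n) (hE : |E| < 2 * n ^ 2) (hE' : |E'| < 2 * n ^ 2)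
    (hm : m < 4 * n ^ 2) (hm' : m' < 4 * n ^ 2)
    (hmem : z ^ (E - m * (4 * n ^ 2) * q) * c ∈ K)
    (hmem' : z ^ (E' - m' * (4 * n ^ 2) * q) * c ∈ K) : m = m' := by
  by_contra hne
  have hm : (m : ℤ) < 4 * n ^ 2 := by exact_mod_cast hm
  have hm' : (m' : ℤ) < 4 * n ^ 2 := by exact_mod_cast hm'
  set N : ℤ := (n : ℤ)
  set D : ℤ := m - m'
  have hdiff : z ^ ((E - E') - D * (4 * N ^ 2) * q) ∈ K := by
    have := K.mul_mem hmem (K.inv_mem hmem')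
    rwa [mul_inv_rev, mul_assoc, mul_inv_cancel_left, ← zpow_neg, ← zpow_add,
      show E - m * (4 * N ^ 2) * q + -(E' - m' * (4 * N ^ 2) * q) =
        (E - E') - D * (4 * N ^ 2) * q by ring] at this
  have hN : 1 ≤ N := by linarith [abs_nonneg q, Int.one_le_abs hq]
  have hD : 1 ≤ |D| := Int.one_le_abs (sub_ne_zero.mpr (by exact_mod_cast hne))
  have hD' : |D| ≤ 4 * N ^ 2 := by
    rw [abs_sub_le_iff]; constructor <;> linarith [Int.natCast_nonneg m, Int.natCast_nonneg m']
  have hEE : |E - E'| < 4 * N ^ 2 := (abs_sub _ _).trans_lt (by linarith)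
  -- the shift `D * 4N² * q` is a nonzero multiple of `4N²`, so it cannot cancel `E - E'`
  have hshift : |D * (4 * N ^ 2) * q| = |D| * (4 * N ^ 2) * |q| := by
    rw [abs_mul, abs_mul, abs_of_pos (show (0 : ℤ) < 4 * N ^ 2 by nlinarith)]
  have hlow : 4 * N ^ 2 ≤ |D * (4 * N ^ 2) * q| := by
    rw [hshift]
    calc 4 * N ^ 2 = 1 * (4 * N ^ 2) * 1 := by ring
      _ ≤ |D| * (4 * N ^ 2) * |q| := by gcongr; exact Int.one_le_abs hq
  have hhigh : |D * (4 * N ^ 2) * q| ≤ 16 * N ^ 5 := by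
    rw [hshift]
    calc |D| * (4 * N ^ 2) * |q| ≤ 4 * N ^ 2 * (4 * N ^ 2) * N := by gcongr
      _ = 16 * N ^ 5 := by ring
  refine hz _ (fun h0 => ?_) ?_ hdiff
  · rw [sub_eq_zero.mp h0] at hEE; linarith
  · calc |E - E' - D * (4 * N ^ 2) * q| ≤ |E - E'| + |D * (4 * N ^ 2) * q| := abs_sub _ _
      _ ≤ 20 * N ^ 5 := by nlinarith [pow_le_pow_right₀ hN (show 2 ≤ 5 by norm_num)]

theorem exists_zpow_sub_mul_heisenbergElem_notMem (a b z : G) {K : Subgroup G} {n : ℕ}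
    (hz : ∀ k : ℤ, k ≠ 0 → |k| ≤ 20 * n ^ 5 → z ^ k ∉ K) :
    ∃ α : ℤ, ∀ E P Q : ℤ, |E| < 2 * n ^ 2 → |P| < n → |Q| < n → Q ≠ 0 →
      heisenbergElem a b z (E - α * Q) P Q ∉ K := by
  by_contra! hbad
  choose E P Q hE hP hQ hQ0 hmem using hbad
  have hn : 1 ≤ n := by
    have := (abs_nonneg (Q 0)).trans_lt (hQ 0); omega
  -- pigeonhole: `4n²` shifts `α = m * 4n²`, but fewer than `4n²` possible pairs `(P, Q)`
  let box : Finset (ℤ × ℤ) := Finset.Ioo (-n : ℤ) n ×ˢ Finset.Ioo (-n : ℤ) n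
  let f : ℕ → ℤ × ℤ := fun m => (P (m * (4 * n ^ 2)), Q (m * (4 * n ^ 2)))
  have hmaps : ∀ m ∈ Finset.range (4 * n ^ 2), f m ∈ box := fun m _ => by
    simp only [box, f, Finset.mem_product, Finset.mem_Ioo, ← abs_lt, hP, hQ, and_self]
  have hcard : box.card < (Finset.range (4 * n ^ 2)).card := by
    simp only [box, Finset.card_product, Int.card_Ioo, Finset.card_range]
    have : (n - -n - 1 : ℤ).toNat = 2 * n - 1 := by omega
    rw [this]
    zify [show 1 ≤ 2 * n by omega]
    nlinarith
  obtain ⟨m, hm, m', hm', hne, hfeq⟩ := Finset.exists_ne_map_eq_of_card_lt_of_maps_to hcard hmaps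
  simp only [f, Prod.mk.injEq] at hfeq
  refine hne (eq_of_zpow_mul_mem hz (c := a ^ P (m * (4 * n ^ 2)) * b ^ Q (m * (4 * n ^ 2)))
    (hQ0 (m * (4 * n ^ 2))) (hQ _) (hE (m * (4 * n ^ 2))) (hE (m' * (4 * n ^ 2)))
    (Finset.mem_range.mp hm) (Finset.mem_range.mp hm') ?_ ?_)
  · rw [← mul_assoc]; exact hmem _
  · rw [← mul_assoc, hfeq.1, hfeq.2]; exact hmem _

end Counting

section Action

variable {G X : Type*} [Group G] [MulAction G X]

theorem exists_zpow_smul_ne_of_not_isOfFinOrder [FaithfulSMul G X] {z : G}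
    (hz : ¬IsOfFinOrder z) (B : ℕ) : ∃ x : X, ∀ k : ℤ, k ≠ 0 → |k| ≤ B → z ^ k • x ≠ x := by
  by_contra! hfix
  -- every point is fixed by some `z ^ k` with `0 < |k| ≤ B`, hence by `z ^ B!`
  have hfac : ∀ x : X, z ^ (B.factorial : ℤ) • x = x := fun x => by
    obtain ⟨k, hk, hkB, hkx⟩ := hfix x
    rw [Int.abs_eq_natAbs] at hkB
    have hdvd : k ∣ (B.factorial : ℤ) :=
      Int.dvd_natCast.mpr (Nat.dvd_factorial (Int.natAbs_pos.mpr hk) (by omega))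
    rw [← Int.mul_ediv_cancel' hdvd, zpow_mul]
    exact (MulAction.stabilizer G x).zpow_mem hkx _
  refine hz (isOfFinOrder_iff_zpow_eq_one.mpr ⟨B.factorial, by positivity, ?_⟩)
  exact eq_of_smul_eq_smul fun x => by rw [hfac x, one_smul]

namespace IsHeisenbergTriple

variable {a b z : G} (h : IsHeisenbergTriple a b z)
include h

theorem free_left_or_free_right {x : X} {n : ℕ}
    (hz : ∀ k : ℤ, k ≠ 0 → |k| < n ^ 2 → z ^ k • x ≠ x) :
    (∀ t i : ℤ, i ≠ 0 → |i| < n → (z ^ t * a ^ i) • x ≠ x) ∨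
      (∀ t j : ℤ, j ≠ 0 → |j| < n → (z ^ t * b ^ j) • x ≠ x) := by
  by_contra! hfix
  obtain ⟨⟨t, i, hi, hin, hix⟩, ⟨s, j, hj, hjn, hjx⟩⟩ := hfix
  have hcomm : ⁅z ^ t * a ^ i, z ^ s * b ^ j⁆ = z ^ (i * j) := by
    have hz (k : ℤ) : z ^ k = heisenbergElem a b z k 0 0 := by simp [heisenbergElem]
    have ha : z ^ t * a ^ i = heisenbergElem a b z t i 0 := by simp [heisenbergElem]
    have hb : z ^ s * b ^ j = heisenbergElem a b z s 0 j := by simp [heisenbergElem]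
    rw [ha, hb, hz, commutatorElement_def, h.heisenbergElem_inv, h.heisenbergElem_inv,
      h.heisenbergElem_mul, h.heisenbergElem_mul, h.heisenbergElem_mul]
    congr 1 <;> ring
  refine hz (i * j) (mul_ne_zero hi hj) ?_ ?_
  · rw [abs_mul, sq]
    exact mul_lt_mul'' hin hjn (abs_nonneg i) (abs_nonneg j)
  · have ha : z ^ t * a ^ i ∈ MulAction.stabilizer G x := hix
    have hb : z ^ s * b ^ j ∈ MulAction.stabilizer G x := hjx
    rw [← hcomm, commutatorElement_def]
    exact mul_mem (mul_mem (mul_mem ha hb) (inv_mem ha)) (inv_mem hb)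

theorem exists_forall_heisenbergElem_smul_eq_imp {x : X} {n : ℕ}
    (hz : ∀ k : ℤ, k ≠ 0 → |k| ≤ 20 * n ^ 5 → z ^ k • x ≠ x)
    (hfree : ∀ t i : ℤ, i ≠ 0 → |i| < n → (z ^ t * a ^ i) • x ≠ x) :
    ∃ y : X, ∀ E P Q : ℤ, |E| < 2 * n ^ 2 → |P| < n → |Q| < n →
      heisenbergElem a b z E P Q • y = y → E = 0 ∧ P = 0 ∧ Q = 0 := by
  obtain ⟨α, hα⟩ := exists_zpow_sub_mul_heisenbergElem_notMem a b z
    (K := MulAction.stabilizer G x) hz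
  refine ⟨a ^ α • x, fun E P Q hE hP hQ hfix => ?_⟩
  -- moving the base point by `a ^ α` shears the `z`-exponent by `α * Q`
  have hx : heisenbergElem a b z (E - α * Q) P Q • x = x := by
    rw [← h.conj_heisenbergElem, mul_smul, mul_smul, hfix, ← mul_smul, zpow_neg,
      inv_mul_cancel, one_smul]
  obtain rfl : Q = 0 := by_contra fun hQ0 => hα E P Q hE hP hQ hQ0 hx
  obtain rfl : P = 0 := by_contra fun hP0 => hfree _ P hP0 hP (by simpa [heisenbergElem] using hx)
  refine ⟨by_contra fun hE0 => hz E hE0 ?_ (by simpa [heisenbergElem] using hx), rfl, rfl⟩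
  have hn : (1 : ℤ) ≤ n := by
    exact_mod_cast Nat.one_le_iff_ne_zero.mpr (by rintro rfl; simp at hP)
  nlinarith [pow_le_pow_right₀ hn (show 2 ≤ 5 by norm_num)]

theorem injOn_heisenbergElem_smul {y : X} {n : ℕ}
    (hy : ∀ E P Q : ℤ, |E| < 2 * n ^ 2 → |P| < n → |Q| < n →
      heisenbergElem a b z E P Q • y = y → E = 0 ∧ P = 0 ∧ Q = 0) :
    Set.InjOn (fun t : ℕ × ℕ × ℕ => heisenbergElem a b z t.1 t.2.1 t.2.2 • y)
      ↑(Finset.range (n * n) ×ˢ Finset.range n ×ˢ Finset.range n) := by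
  rintro ⟨k, i, j⟩ ht ⟨k', i', j'⟩ ht' heq
  simp only [Finset.coe_product, Set.mem_prod, Finset.mem_coe, Finset.mem_range] at ht ht'
  have hfix : ((heisenbergElem a b z k' i' j')⁻¹ * heisenbergElem a b z k i j) • y = y := by
    rw [mul_smul]; exact inv_smul_eq_iff.mpr heq
  rw [h.heisenbergElem_inv_mul] at hfix
  have hbox (u v : ℕ) (hu : u < n) (hv : v < n) : |(u : ℤ) - v| < n := by
    rw [abs_sub_lt_iff]; omega
  have hE : |(k : ℤ) - k' + (i - i') * j'| < 2 * n ^ 2 := by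
    have : (k : ℤ) < n * n := by exact_mod_cast ht.1
    have : (k' : ℤ) < n * n := by exact_mod_cast ht'.1
    rw [abs_lt]; constructor <;> nlinarith
  obtain ⟨hk, hi, hj⟩ := hy _ _ _ hE (hbox i i' ht.2.1 ht'.2.1) (hbox j j' ht.2.2 ht'.2.2) hfix
  rw [sub_eq_zero] at hi hj
  rw [hi, sub_self, zero_mul, add_zero, sub_eq_zero] at hk
  simp only [Prod.mk.injEq, Nat.cast_inj] at hk hi hj ⊢
  exact ⟨hk, hi, hj⟩

end IsHeisenbergTriple

end Action

section Growth

variable {G : Type*} [Group G] {S : Set G} {a b z : G}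

namespace IsHeisenbergTriple

variable (h : IsHeisenbergTriple a b z)
include h

theorem heisenbergElem_mem_wordBall (hsym : ∀ s ∈ S, s⁻¹ ∈ S) {L n k i j : ℕ}
    (ha : a ∈ wordBall S L) (hb : b ∈ wordBall S L) (hk : k < n * n) (hi : i < n) (hj : j < n) :
    heisenbergElem a b z k i j ∈ wordBall S (10 * L * n) := by
  have hn : 1 ≤ n := by omega
  -- this is how the `n²` central elements `z ^ k` fit into a ball of radius `O(n)`
  have hzk : z ^ k = ⁅a ^ (k / n), b ^ n⁆ * ⁅a ^ 1, b ^ (k % n)⁆ := by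
    rw [h.commutatorElement_pow_pow, h.commutatorElement_pow_pow, ← pow_add, one_mul,
      Nat.div_add_mod']
  have hz : z ^ k ∈ wordBall S (4 * (n * L) + 4 * (n * L)) := by
    rw [hzk]
    exact mul_mem_wordBall
      (commutatorElement_mem_wordBall hsym
        (pow_mem_wordBall_of_le ha ((Nat.div_lt_iff_lt_mul hn).mpr hk).le)
        (pow_mem_wordBall_of_le hb le_rfl))
      (commutatorElement_mem_wordBall hsym (pow_mem_wordBall_of_le ha hn)
        (pow_mem_wordBall_of_le hb (Nat.mod_lt k hn).le))
  simp only [heisenbergElem, zpow_natCast]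
  exact wordBall_mono (le_of_eq (by ring)) (mul_mem_wordBall
    (mul_mem_wordBall hz (pow_mem_wordBall_of_le ha hi.le)) (pow_mem_wordBall_of_le hb hj.le))

variable {X : Type*} [MulAction G X]

theorem pow_four_le_actionGrowth_of_free_left (hS : S.Finite) (hsym : ∀ s ∈ S, s⁻¹ ∈ S)
    {L : ℕ} (ha : a ∈ wordBall S L) (hb : b ∈ wordBall S L) {x : X} {n : ℕ}
    (hz : ∀ k : ℤ, k ≠ 0 → |k| ≤ 20 * n ^ 5 → z ^ k • x ≠ x)
    (hfree : ∀ t i : ℤ, i ≠ 0 → |i| < n → (z ^ t * a ^ i) • x ≠ x) :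
    n ^ 4 ≤ actionGrowth G X S (10 * L * n) := by
  obtain ⟨y, hy⟩ := h.exists_forall_heisenbergElem_smul_eq_imp hz hfree
  have := card_le_actionGrowth hS (x := y)
    (f := fun t : ℕ × ℕ × ℕ => heisenbergElem a b z t.1 t.2.1 t.2.2) (fun t ht => by
      simp only [Finset.mem_product, Finset.mem_range] at ht
      exact h.heisenbergElem_mem_wordBall hsym ha hb ht.1 ht.2.1 ht.2.2)
    (h.injOn_heisenbergElem_smul hy)
  simpa [Finset.card_product, ← pow_two, ← pow_mul] using this

theorem pow_four_le_actionGrowth [FaithfulSMul G X] (hz : ¬IsOfFinOrder z) (hS : S.Finite)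
    (hsym : ∀ s ∈ S, s⁻¹ ∈ S) {L : ℕ} (ha : a ∈ wordBall S L) (hb : b ∈ wordBall S L) (n : ℕ) :
    n ^ 4 ≤ actionGrowth G X S (10 * L * n) := by
  obtain ⟨x, hx⟩ := exists_zpow_smul_ne_of_not_isOfFinOrder (X := X) hz (20 * n ^ 5)
  have hx : ∀ k : ℤ, k ≠ 0 → |k| ≤ 20 * n ^ 5 → z ^ k • x ≠ x := by exact_mod_cast hx
  have hx' : ∀ k : ℤ, k ≠ 0 → |k| < n ^ 2 → z ^ k • x ≠ x := fun k hk hkn => by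
    have hn : (1 : ℤ) ≤ n := by nlinarith [Int.one_le_abs hk]
    exact hx k hk (by nlinarith [pow_le_pow_right₀ hn (show 2 ≤ 5 by norm_num)])
  rcases h.free_left_or_free_right hx' with hfree | hfree
  · exact h.pow_four_le_actionGrowth_of_free_left hS hsym ha hb hx hfree
  · refine h.symm.pow_four_le_actionGrowth_of_free_left hS hsym hb ha (x := x)
      (fun k hk hkn => ?_) (fun t j hj hjn => ?_)
    · simpa [← zpow_neg] using hx (-k) (neg_ne_zero.mpr hk) (by rwa [abs_neg])
    · simpa [← zpow_neg] using hfree (-t) j hj hjn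

theorem schreierGrowthGap (hz : ¬IsOfFinOrder z) : SchreierGrowthGap G fun n => (n : ℝ) ^ 4 := by
  intro S hS hsym hgen X _ _ _
  obtain ⟨La, ha⟩ := exists_mem_wordBall hgen hsym a
  obtain ⟨Lb, hb⟩ := exists_mem_wordBall hgen hsym b
  set L := La + Lb + 1
  refine ⟨10 * L, by omega, fun n _ => ?_⟩
  have key := h.pow_four_le_actionGrowth (X := X) hz hS hsym
    (wordBall_mono (by omega : La ≤ L) ha) (wordBall_mono (by omega : Lb ≤ L) hb) n
  calc (n : ℝ) ^ 4 ≤ actionGrowth G X S (10 * L * n) := by exact_mod_cast key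
    _ ≤ (10 * L : ℕ) * (actionGrowth G X S (10 * L * n) : ℝ) :=
      le_mul_of_one_le_left (Nat.cast_nonneg _) (by norm_cast; omega)

end IsHeisenbergTriple

end Growth

section Nilpotent

variable {G : Type*} [Group G]

/-- `G` contains a copy of the discrete Heisenberg group, generated by `a` and `b`. -/
def HasHeisenbergTriple (G : Type*) [Group G] : Prop :=
  ∃ a b z : G, IsHeisenbergTriple a b z ∧ ¬IsOfFinOrder z

theorem HasHeisenbergTriple.of_injective {H : Type*} [Group H] {f : H →* G}
    (hf : Function.Injective f) : HasHeisenbergTriple H → HasHeisenbergTriple G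
  | ⟨a, b, z, h, hz⟩ => ⟨f a, f b, f z, h.map f, hf.isOfFinOrder_iff.not.mpr hz⟩

theorem HasHeisenbergTriple.of_quotient_center
    (hQ : HasHeisenbergTriple (G ⧸ Subgroup.center G)) : HasHeisenbergTriple G := by
  obtain ⟨a', b', z', hQ, hz'⟩ := hQ
  obtain ⟨a, rfl⟩ := QuotientGroup.mk'_surjective (Subgroup.center G) a'
  obtain ⟨b, rfl⟩ := QuotientGroup.mk'_surjective (Subgroup.center G) b'
  set π := QuotientGroup.mk' (Subgroup.center G)
  have hmem (g : G) (hg : π g = 1) : g ∈ Subgroup.center G := (QuotientGroup.eq_one_iff g).mp hg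
  set z := ⁅a, b⁆
  have hπz : π z = z' := by rw [map_commutatorElement, hQ.commutatorElement_eq]
  have hza := IsHeisenbergTriple.of_mem_center (hmem ⁅z, a⁆ (by
    rw [map_commutatorElement, hπz, commutatorElement_eq_one_iff_commute]; exact hQ.commute_left))
  have hzb := IsHeisenbergTriple.of_mem_center (hmem ⁅z, b⁆ (by
    rw [map_commutatorElement, hπz, commutatorElement_eq_one_iff_commute]; exact hQ.commute_right))
  by_cases hfa : IsOfFinOrder ⁅z, a⁆
  swap; · exact ⟨z, a, _, hza, hfa⟩
  by_cases hfb : IsOfFinOrder ⁅z, b⁆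
  swap; · exact ⟨z, b, _, hzb, hfb⟩
  -- otherwise some power `z ^ e` commutes with `a` and `b`, and `⁅a, b ^ e⁆` lifts `z' ^ e`
  obtain ⟨e, he, hea, heb⟩ : ∃ e : ℤ, e ≠ 0 ∧ Commute (z ^ e) a ∧ Commute (z ^ e) b := by
    obtain ⟨p, hp, hpa⟩ := isOfFinOrder_iff_zpow_eq_one.mp hfa
    obtain ⟨q, hq, hqb⟩ := isOfFinOrder_iff_zpow_eq_one.mp hfb
    exact ⟨p * q, mul_ne_zero hp hq,
      hza.commute_zpow_left_of_zpow_eq_one (by rw [zpow_mul, hpa, one_zpow]),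
      hzb.commute_zpow_left_of_zpow_eq_one (by rw [mul_comm, zpow_mul, hqb, one_zpow])⟩
  have hπc : π ⁅a, b ^ e⁆ = z' ^ e := by
    simpa [map_commutatorElement] using (hQ.zpow_zpow 1 e).commutatorElement_eq
  have hc : (z ^ e)⁻¹ * ⁅a, b ^ e⁆ ∈ Subgroup.center G :=
    hmem _ (by rw [map_mul, map_inv, map_zpow, hπz, hπc, inv_mul_cancel])
  have hcomm (g : G) (hg : Commute (z ^ e) g) : Commute ⁅a, b ^ e⁆ g := by
    rw [← mul_inv_cancel_left (z ^ e) ⁅a, b ^ e⁆]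
    exact hg.mul_left (Subgroup.mem_center_iff.mp hc g).symm
  refine ⟨a, b ^ e, _, .of_commute (hcomm a hea) (hcomm _ (heb.zpow_right e)), fun hfin => hz' ?_⟩
  obtain ⟨m, hm, hzm⟩ := isOfFinOrder_iff_zpow_eq_one.mp (π.isOfFinOrder hfin)
  rw [hπc, ← zpow_mul] at hzm
  exact isOfFinOrder_iff_zpow_eq_one.mpr ⟨e * m, mul_ne_zero he hm, hzm⟩

theorem VirtuallyAbelian.of_finiteIndex {A : Subgroup G} [A.FiniteIndex]
    (hA : VirtuallyAbelian A) : VirtuallyAbelian G := by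
  obtain ⟨B, hB, hcomm⟩ := hA
  refine ⟨B.map A.subtype, ⟨?_⟩, ?_⟩
  · rw [Subgroup.index_map_subtype]
    exact mul_ne_zero hB.1 Subgroup.FiniteIndex.index_ne_zero
  · rintro ⟨_, u, hu, rfl⟩ ⟨_, v, hv, rfl⟩
    exact Subtype.ext (congrArg (fun w : B => ((w : A) : G)) (hcomm ⟨u, hu⟩ ⟨v, hv⟩))

theorem virtuallyAbelian_of_finiteIndex_center [(Subgroup.center G).FiniteIndex] :
    VirtuallyAbelian G :=
  ⟨Subgroup.center G, inferInstance, fun x y => Subtype.ext (Subgroup.mem_center_iff.mp y.2 x)⟩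

open scoped IsMulCommutative in
theorem finiteIndex_centralizer_of_commutatorElement [Group.FG G] {g : G}
    (hcen : ∀ x : G, ⁅g, x⁆ ∈ Subgroup.center G) (htor : ∀ x : G, IsOfFinOrder ⁅g, x⁆) :
    (Subgroup.centralizer {g}).FiniteIndex := by
  -- `x ↦ ⁅g, x⁆` is a homomorphism, whose image is a finitely generated abelian torsion group
  let φ : G →* G := MonoidHom.mk' (fun x => ⁅g, x⁆) fun x y => by
    rw [commutatorElement_mul_right_eq_mul_conj, mul_assoc _ x,
      Subgroup.mem_center_iff.mp (hcen y) x]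
    group
  have hker : φ.ker = Subgroup.centralizer {g} := by
    ext x
    rw [MonoidHom.mem_ker, Subgroup.mem_centralizer_singleton_iff]
    exact commutatorElement_eq_one_iff_mul_comm.trans eq_comm
  have : IsMulCommutative φ.range := .of_comm <| by
    rintro ⟨_, x, rfl⟩ ⟨_, y, rfl⟩
    exact Subtype.ext (Subgroup.mem_center_iff.mp (hcen y) (φ x))
  have : Finite φ.range := CommGroup.finite_of_fg_isMulTorsion φ.range <| by
    rintro ⟨_, x, rfl⟩
    exact Submonoid.isOfFinOrder_coe.mp (htor x)
  rw [← hker]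
  exact ⟨by rw [Subgroup.index_ker]; exact Nat.card_pos.ne'⟩

theorem virtuallyAbelian_or_hasHeisenbergTriple_of_commutatorElement_mem_center [Group.FG G]
    (hcen : ∀ x y : G, ⁅x, y⁆ ∈ Subgroup.center G) :
    VirtuallyAbelian G ∨ HasHeisenbergTriple G := by
  by_cases htor : ∀ x y : G, IsOfFinOrder ⁅x, y⁆
  · obtain ⟨T, hT⟩ := Group.FG.out (G := G)
    have : (Subgroup.center G).FiniteIndex := by
      rw [Subgroup.center_eq_infi' hT]
      exact Subgroup.finiteIndex_iInf fun g =>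
        finiteIndex_centralizer_of_commutatorElement (hcen g) (htor g)
    exact .inl virtuallyAbelian_of_finiteIndex_center
  · push Not at htor
    obtain ⟨x, y, hxy⟩ := htor
    exact .inr ⟨x, y, _, .of_mem_center (hcen x y), hxy⟩

theorem virtuallyAbelian_or_hasHeisenbergTriple_of_virtuallyAbelian_quotient_center [Group.FG G]
    (hQ : VirtuallyAbelian (G ⧸ Subgroup.center G)) :
    VirtuallyAbelian G ∨ HasHeisenbergTriple G := by
  obtain ⟨B, hB, hcomm⟩ := hQ
  let A := B.comap (QuotientGroup.mk' (Subgroup.center G))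
  have : A.FiniteIndex :=
    ⟨by rw [Subgroup.index_comap_of_surjective _ (QuotientGroup.mk'_surjective _)]; exact hB.1⟩
  have hcen (x y : A) : ⁅x, y⁆ ∈ Subgroup.center A := by
    have hxy : ⁅(x : G), (y : G)⁆ ∈ Subgroup.center G := by
      rw [← QuotientGroup.eq_one_iff, ← QuotientGroup.mk'_apply, map_commutatorElement,
        commutatorElement_eq_one_iff_mul_comm]
      exact congrArg Subtype.val (hcomm ⟨_, x.2⟩ ⟨_, y.2⟩)
    exact Subgroup.mem_center_iff.mpr fun w => Subtype.ext (Subgroup.mem_center_iff.mp hxy w)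
  exact (virtuallyAbelian_or_hasHeisenbergTriple_of_commutatorElement_mem_center hcen).imp
    VirtuallyAbelian.of_finiteIndex (HasHeisenbergTriple.of_injective A.subtype_injective)

theorem virtuallyAbelian_or_hasHeisenbergTriple [Group.FG G] [Group.IsNilpotent G] :
    VirtuallyAbelian G ∨ HasHeisenbergTriple G := by
  refine Group.nilpotent_center_quotient_ind
    (P := fun G _ _ => Group.FG G → VirtuallyAbelian G ∨ HasHeisenbergTriple G) G
    (fun G _ _ _ => .inl ⟨⊤, inferInstance, fun _ _ => Subsingleton.elim _ _⟩)
    (fun G _ _ ih _ => ?_) ‹_›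
  rcases ih inferInstance with hva | hQ
  · exact virtuallyAbelian_or_hasHeisenbergTriple_of_virtuallyAbelian_quotient_center hva
  · exact .inr hQ.of_quotient_center

theorem hasHeisenbergTriple_of_virtuallyNilpotent [Group.FG G] (hvn : VirtuallyNilpotent G)
    (hnva : ¬VirtuallyAbelian G) : HasHeisenbergTriple G := by
  obtain ⟨H, _, _⟩ := hvn
  rcases virtuallyAbelian_or_hasHeisenbergTriple (G := H) with hva | hH
  · exact absurd hva.of_finiteIndex hnva
  · exact hH.of_injective H.subtype_injective

end Nilpotent

/-- A finitely generated virtually nilpotent group that is not virtually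
abelian has a Schreier growth gap `n^4`. -/
theorem virtually_nilpotent_schreier_growth_gap_n4 (G : Type*) [Group G] [Group.FG G]
    (hvn : VirtuallyNilpotent G) (hnva : ¬ VirtuallyAbelian G) :
    SchreierGrowthGap G (fun n => (n : ℝ) ^ 4) := by
  obtain ⟨a, b, z, h, hz⟩ := hasHeisenbergTriple_of_virtuallyNilpotent hvn hnva
  exact h.schreierGrowthGap hz
end

section
/- Let G be a finitely generated nilpotent group that is not virtually abelian. Then G contains a subgroup isomorphic to the integral Heisenberg group H₃(ℤ): there exist g, h ∈ G such that, writing c = g h g⁻¹ h⁻¹, one has c ≠ 1, g c = c g, h c = c h, and the map ℤ³ → G sending (a, b, e) to g^a h^b c^e is injective. -/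
/-!
Induct on the length of the lower central series: if `γₙ₊₁ = ⊥`, then `L = γₙ` is central and
generated by the commutators `⁅x, y⁆` with `x ∈ γₙ₋₁`. If one of them has infinite order, `(x, y)`
is already a Heisenberg pair. Otherwise `L` is torsion and we pass to `G ⧸ L`. A Heisenberg pair of
the quotient lifts to `(g, hᵐ)` for lifts `g, h`, where `m` kills the torsion commutators of `g`
and `h` with `c = ⁅g, h⁆`. If instead `G ⧸ L` is virtually abelian, all commutators of a
finite-index preimage `H` of an abelian subgroup are central torsion; then for each generator `x`
of `H`, `a ↦ ⁅a, x⁆` is a homomorphism onto a finitely generated abelian torsion group, hence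
finite, so the centralizer of `x`, and with it the center of `H`, has finite index.

For a Heisenberg pair, conjugating `gᵃ hᵇ cᵉ` by `g` and by `h` multiplies it by `cᵇ` and `c⁻ᵃ`,
which determines `b` and `a`, and then `e`.
-/

open scoped commutatorElement

open Subgroup

universe u

section

variable {G : Type*} [Group G]

theorem commutatorElement_pow_right {g h : G} (hc : Commute h ⁅g, h⁆) (n : ℕ) :
    ⁅g, h ^ n⁆ = ⁅g, h⁆ ^ n := by
  have hconj : g * h * g⁻¹ = ⁅g, h⁆ * h := by rw [commutatorElement_def]; group
  rw [commutatorElement_def, ← conj_pow, hconj, hc.symm.mul_pow, mul_inv_cancel_right]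

theorem isOfFinOrder_of_mem_closure {s : Set G} (hs : s ⊆ center G)
    (ht : ∀ x ∈ s, IsOfFinOrder x) {z : G} (hz : z ∈ closure s) : IsOfFinOrder z := by
  have hcen : closure s ≤ center G := (closure_le _).mpr hs
  induction hz using closure_induction with
  | mem x hx => exact ht x hx
  | one => exact .one
  | mul x y _ hy hx hy' => exact Commute.isOfFinOrder_mul (mem_center_iff.mp (hcen hy) x) hx hy'
  | inv x _ hx => exact hx.inv

structure IsHeisenbergPair (g h : G) : Prop where
  not_isOfFinOrder : ¬IsOfFinOrder ⁅g, h⁆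
  commute_left : Commute g ⁅g, h⁆
  commute_right : Commute h ⁅g, h⁆

theorem isHeisenbergPair_of_mem_center {g h : G} (hc : ⁅g, h⁆ ∈ center G)
    (hinf : ¬IsOfFinOrder ⁅g, h⁆) : IsHeisenbergPair g h :=
  ⟨hinf, mem_center_iff.mp hc g, mem_center_iff.mp hc h⟩

namespace IsHeisenbergPair

variable {g h : G}

theorem commutatorElement_ne_one (H : IsHeisenbergPair g h) : ⁅g, h⁆ ≠ 1 :=
  fun h1 => H.not_isOfFinOrder (h1 ▸ .one)

theorem semiconjBy_left (H : IsHeisenbergPair g h) (a b e : ℤ) :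
    SemiconjBy g (g ^ a * h ^ b * ⁅g, h⁆ ^ e) (⁅g, h⁆ ^ b * (g ^ a * h ^ b * ⁅g, h⁆ ^ e)) := by
  have hgh : SemiconjBy g h (⁅g, h⁆ * h) := by
    rw [SemiconjBy, commutatorElement_def]; group
  have := (SemiconjBy.mul_right ((Commute.refl g).zpow_right a) (hgh.zpow_right b)).mul_right
    (H.commute_left.zpow_right e)
  rwa [H.commute_right.symm.mul_zpow, ← mul_assoc, (H.commute_left.zpow_zpow a b).eq,
    mul_assoc (_ ^ b), mul_assoc (_ ^ b)] at this

theorem semiconjBy_right (H : IsHeisenbergPair g h) (a b e : ℤ) :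
    SemiconjBy h (g ^ a * h ^ b * ⁅g, h⁆ ^ e) (⁅g, h⁆ ^ (-a) * (g ^ a * h ^ b * ⁅g, h⁆ ^ e)) := by
  have hhg : SemiconjBy h g (⁅g, h⁆⁻¹ * g) := by
    rw [SemiconjBy, commutatorElement_def]; group
  have := ((hhg.zpow_right a).mul_right ((Commute.refl h).zpow_right b)).mul_right
    (H.commute_right.zpow_right e)
  rwa [H.commute_left.symm.inv_left.mul_zpow, inv_zpow', mul_assoc (_ ^ (-a)),
    mul_assoc (_ ^ (-a))] at this

theorem injective (H : IsHeisenbergPair g h) :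
    Function.Injective fun p : ℤ × ℤ × ℤ => g ^ p.1 * h ^ p.2.1 * ⁅g, h⁆ ^ p.2.2 := by
  have hinj := injective_zpow_iff_not_isOfFinOrder.mpr H.not_isOfFinOrder
  have left_factor_eq {k x u v : G} (hu : SemiconjBy k x (u * x)) (hv : SemiconjBy k x (v * x)) :
      u = v :=
    mul_right_cancel (mul_right_cancel (hu.eq.symm.trans hv.eq))
  rintro ⟨a, b, e⟩ ⟨a', b', e'⟩ (hx : g ^ a * h ^ b * ⁅g, h⁆ ^ e = g ^ a' * h ^ b' * ⁅g, h⁆ ^ e')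
  have ha : a = a' := neg_injective <| hinj <|
    left_factor_eq (H.semiconjBy_right a b e) (hx ▸ H.semiconjBy_right a' b' e')
  have hb : b = b' := hinj <|
    left_factor_eq (H.semiconjBy_left a b e) (hx ▸ H.semiconjBy_left a' b' e')
  subst ha hb
  rw [hinj (mul_left_cancel hx)]

theorem exists_of_surjective {Q : Type*} [Group Q] {π : G →* Q}
    (hπ : Function.Surjective π) (hker : π.ker ≤ center G)
    (hker_torsion : ∀ z ∈ π.ker, IsOfFinOrder z) {A B : Q} (H : IsHeisenbergPair A B) :
    ∃ g h : G, IsHeisenbergPair g h := by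
  obtain ⟨g, rfl⟩ := hπ A
  obtain ⟨h, rfl⟩ := hπ B
  have central {z : G} (hz : z ∈ π.ker) (x : G) : Commute z x :=
    (mem_center_iff.mp (hker hz) x).symm
  set c := ⁅g, h⁆
  have hπc : π c = ⁅π g, π h⁆ := map_commutatorElement π g h
  have hgc : ⁅g, c⁆ ∈ π.ker := by
    rw [MonoidHom.mem_ker, map_commutatorElement, hπc, commutatorElement_eq_one_iff_commute]
    exact H.commute_left
  have hhc : ⁅h, c⁆ ∈ π.ker := by
    rw [MonoidHom.mem_ker, map_commutatorElement, hπc, commutatorElement_eq_one_iff_commute]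
    exact H.commute_right
  set m := orderOf ⁅g, c⁆ * orderOf ⁅h, c⁆
  have hm : m ≠ 0 :=
    (Nat.mul_pos (hker_torsion _ hgc).orderOf_pos (hker_torsion _ hhc).orderOf_pos).ne'
  have hgcm : Commute g (c ^ m) := by
    rw [← commutatorElement_eq_one_iff_commute, commutatorElement_pow_right (central hgc c).symm,
      orderOf_dvd_iff_pow_eq_one.mp (dvd_mul_right _ _)]
  have hhcm : Commute h (c ^ m) := by
    rw [← commutatorElement_eq_one_iff_commute, commutatorElement_pow_right (central hhc c).symm,
      orderOf_dvd_iff_pow_eq_one.mp (dvd_mul_left _ _)]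
  obtain ⟨z, hz, hzc⟩ : ∃ z ∈ π.ker, ⁅g, h ^ m⁆ = z * c ^ m := by
    refine ⟨⁅g, h ^ m⁆ * (c ^ m)⁻¹, ?_, (inv_mul_cancel_right _ _).symm⟩
    rw [MonoidHom.mem_ker, map_mul, map_inv, map_pow, map_commutatorElement, map_pow, hπc,
      commutatorElement_pow_right H.commute_right, mul_inv_cancel]
  refine ⟨g, h ^ m, ⟨fun hfin => H.not_isOfFinOrder ?_, ?_, ?_⟩⟩
  · have := π.isOfFinOrder hfin
    rw [map_commutatorElement, map_pow, commutatorElement_pow_right H.commute_right] at this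
    exact this.of_pow hm
  · rw [hzc]; exact (central hz g).symm.mul_right hgcm
  · rw [hzc]; exact (central hz _).symm.mul_right (hhcm.pow_left m)

end IsHeisenbergPair

def commutatorLeftHom (hc : ∀ a b : G, ⁅a, b⁆ ∈ center G) (x : G) : G →* center G where
  toFun a := ⟨⁅a, x⁆, hc a x⟩
  map_one' := Subtype.ext (commutatorElement_one_left x)
  map_mul' a b := Subtype.ext <| show ⁅a * b, x⁆ = ⁅a, x⁆ * ⁅b, x⁆ by
    rw [commutatorElement_mul_left_eq_conj_mul, mem_center_iff.mp (hc b x) a,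
      mul_inv_cancel_right]
    exact (mem_center_iff.mp (hc b x) _).symm

theorem ker_commutatorLeftHom (hc : ∀ a b : G, ⁅a, b⁆ ∈ center G) (x : G) :
    (commutatorLeftHom hc x).ker = centralizer {x} := by
  ext a
  rw [MonoidHom.mem_ker, mem_centralizer_singleton_iff, ← OneMemClass.coe_eq_one]
  exact commutatorElement_eq_one_iff_mul_comm

open scoped IsMulCommutative in
theorem finite_range_commutatorLeftHom [Group.FG G] (hc : ∀ a b : G, ⁅a, b⁆ ∈ center G)
    (ht : ∀ a b : G, IsOfFinOrder ⁅a, b⁆) (x : G) : Finite (commutatorLeftHom hc x).range := by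
  refine CommGroup.finite_of_fg_isMulTorsion _ ?_
  rintro ⟨_, a, rfl⟩
  rw [← Submonoid.isOfFinOrder_coe, ← Submonoid.isOfFinOrder_coe]
  exact ht a x

theorem finiteIndex_center_of_commutator_mem_center [Group.FG G]
    (hc : ∀ a b : G, ⁅a, b⁆ ∈ center G) (ht : ∀ a b : G, IsOfFinOrder ⁅a, b⁆) :
    (center G).FiniteIndex := by
  obtain ⟨S, hS⟩ := Group.fg_def.mp ‹_›
  rw [center_eq_iInf hS]
  refine finiteIndex_iInf' _ fun x _ => ⟨?_⟩
  have := finite_range_commutatorLeftHom hc ht x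
  rw [← ker_commutatorLeftHom hc, index_ker]
  exact Nat.card_ne_zero.mpr ⟨inferInstance, inferInstance⟩

namespace VirtuallyAbelian

theorem of_finiteIndex_center [(center G).FiniteIndex] : VirtuallyAbelian G :=
  ⟨center G, inferInstance, fun a b => Subtype.ext (mem_center_iff.mp b.2 a)⟩

theorem of_finiteIndex_s2 {H : Subgroup G} [H.FiniteIndex] (hH : VirtuallyAbelian H) :
    VirtuallyAbelian G := by
  obtain ⟨A, hA, hAab⟩ := hH
  refine ⟨A.map H.subtype, ⟨?_⟩, ?_⟩
  · rw [index_map_subtype]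
    exact mul_ne_zero hA.index_ne_zero FiniteIndex.index_ne_zero
  · rintro ⟨_, a, ha, rfl⟩ ⟨_, b, hb, rfl⟩
    exact Subtype.ext (by simpa using congrArg (fun y : A => ((y : H) : G)) (hAab ⟨a, ha⟩ ⟨b, hb⟩))

theorem of_quotient [Group.FG G] {L : Subgroup G} [L.Normal]
    (hLc : L ≤ center G) (hLt : ∀ z ∈ L, IsOfFinOrder z) (hva : VirtuallyAbelian (G ⧸ L)) :
    VirtuallyAbelian G := by
  obtain ⟨A, hA, hAab⟩ := hva
  let H := A.comap (QuotientGroup.mk' L)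
  have : H.FiniteIndex :=
    ⟨by rw [index_comap_of_surjective _ (QuotientGroup.mk'_surjective L)]; exact hA.index_ne_zero⟩
  have hL (a b : H) : ⁅(a : G), (b : G)⁆ ∈ L := by
    rw [← QuotientGroup.ker_mk' L, MonoidHom.mem_ker, map_commutatorElement,
      commutatorElement_eq_one_iff_mul_comm]
    exact congrArg Subtype.val (hAab ⟨_, a.2⟩ ⟨_, b.2⟩)
  have := finiteIndex_center_of_commutator_mem_center (G := H)
    (fun a b => mem_center_iff.mpr fun y => Subtype.ext (mem_center_iff.mp (hLc (hL a b)) y))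
    (fun a b => Submonoid.isOfFinOrder_coe.mp (hLt _ (hL a b)))
  exact of_finiteIndex_s2 (H := H) of_finiteIndex_center

end VirtuallyAbelian

end

theorem exists_isHeisenbergPair_or_virtuallyAbelian_of_lowerCentralSeries_eq_bot (n : ℕ) :
    ∀ (G : Type u) [Group G] [Group.FG G], (⊤ : Subgroup G).lowerCentralSeries (n + 1) = ⊥ →
      (∃ g h : G, IsHeisenbergPair g h) ∨ VirtuallyAbelian G := by
  induction n with
  | zero =>
    intro G _ _ hG
    rw [Subgroup.lowerCentralSeries_succ, Subgroup.lowerCentralSeries_zero,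
      commutator_top_right_eq_bot_iff_le_center, top_le_iff] at hG
    have : (center G).FiniteIndex := hG ▸ inferInstance
    exact .inr .of_finiteIndex_center
  | succ n ih =>
    intro G _ _ hG
    set L := (⊤ : Subgroup G).lowerCentralSeries (n + 1) with hL
    have hLc : L ≤ center G := commutator_top_right_eq_bot_iff_le_center.mp hG
    by_cases htor : ∀ x ∈ (⊤ : Subgroup G).lowerCentralSeries n, ∀ y : G, IsOfFinOrder ⁅x, y⁆
    · have hLt (z : G) (hz : z ∈ L) : IsOfFinOrder z := by
        rw [hL, Subgroup.lowerCentralSeries_succ, Subgroup.commutator_def] at hz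
        refine isOfFinOrder_of_mem_closure ?_ ?_ hz
        · rintro _ ⟨x, hx, y, hy, rfl⟩
          exact hLc (commutator_mem_commutator hx hy)
        · rintro _ ⟨x, hx, y, -, rfl⟩
          exact htor x hx y
      have hQ : (⊤ : Subgroup (G ⧸ L)).lowerCentralSeries (n + 1) = ⊥ := by
        rw [← map_top_of_surjective _ (QuotientGroup.mk'_surjective L),
          ← Subgroup.map_lowerCentralSeries, ← hL, Subgroup.map_eq_bot_iff, QuotientGroup.ker_mk']
      rcases ih (G ⧸ L) hQ with ⟨A, B, H⟩ | hva
      · refine .inl (H.exists_of_surjective (QuotientGroup.mk'_surjective L) ?_ ?_)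
        · rwa [QuotientGroup.ker_mk']
        · rwa [QuotientGroup.ker_mk']
      · exact .inr (hva.of_quotient hLc hLt)
    · push Not at htor
      obtain ⟨x, hx, y, hy⟩ := htor
      exact .inl ⟨x, y,
        isHeisenbergPair_of_mem_center (hLc (commutator_mem_commutator hx (mem_top y))) hy⟩

/-- A finitely generated nilpotent group that is not virtually abelian
contains a copy of the integral Heisenberg group `H₃(ℤ)`: there are `g, h` such that
`c = [g,h]` is nontrivial and central among `g, h, c`, and `(a,b,e) ↦ g^a h^b c^e` is
injective on `ℤ³`. -/
theorem nilpotent_contains_heisenberg (G : Type*) [Group G] [Group.FG G]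
    [Group.IsNilpotent G] (hnva : ¬ VirtuallyAbelian G) :
    ∃ g h : G,
      g * h * g⁻¹ * h⁻¹ ≠ 1 ∧
      Commute g (g * h * g⁻¹ * h⁻¹) ∧
      Commute h (g * h * g⁻¹ * h⁻¹) ∧
      Function.Injective
        (fun p : ℤ × ℤ × ℤ => g ^ p.1 * h ^ p.2.1 * (g * h * g⁻¹ * h⁻¹) ^ p.2.2) := by
  obtain ⟨n, hn⟩ := Subgroup.nilpotent_iff_lowerCentralSeries.mp ‹Group.IsNilpotent G›
  have hn' : (⊤ : Subgroup G).lowerCentralSeries (n + 1) = ⊥ :=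
    le_bot_iff.mp (hn ▸ Subgroup.lowerCentralSeries_antitone _ n.le_succ)
  obtain ⟨g, h, H⟩ :=
    (exists_isHeisenbergPair_or_virtuallyAbelian_of_lowerCentralSeries_eq_bot n G hn').resolve_right
      hnva
  exact ⟨g, h, H.commutatorElement_ne_one, H.commute_left, H.commute_right, H.injective⟩
end

section
/- Let G be a group with a nilpotent normal subgroup N, and let Q = G/N. Let V = N^{ab} ⊗_ℤ ℚ, where N^{ab} is the abelianization of N; assume V is a nonzero finite-dimensional ℚ-vector space, and let ρ : Q → GL(V) be the linear representation induced by the conjugation action of G on N (inner automorphisms of N act trivially on N^{ab}, so this action factors through Q). Assume ρ is strongly irreducible: for every finite-index subgroup Q₀ of Q, the only ρ(Q₀)-invariant ℚ-subspaces of V are 0 and V. Let L be a subset of N such that the induced map from L to N^{ab}/T(N^{ab}) (the abelianization of N modulo its torsion subgroup) is injective. Then L is a non-foldable subset of G. -/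
/-!
If a finite `s ⊆ L` were folded at every point of a faithful `G`-set, every point would be fixed
by one of the finitely many differences `b⁻¹ * a` (`a ≠ b` in `s`); these lie in `N` and have
nonzero image in `V`, hence infinite order. Fix one of them, `d`, and points `x k` moved by
`d ^ k !`. Along a nonprincipal ultrafilter the stabilizers of the `x k` converge to a subgroup
`H` containing no positive power of `d` but meeting every conjugate of the set of differences.
By strong irreducibility the image of `H ∩ N` then spans `V`: a proper subspace cannot contain
one of the vectors `ρ g (v i)` for every `g`, because the maximal "irreducible" subspaces met by
the orbit of `(v i)ᵢ` are finitely many and permuted by `G`. Finally, a subgroup of a nilpotent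
group whose image spans `N^{ab} ⊗ ℚ` contains a positive power of every element, in particular
of `d`.
-/

open scoped commutatorElement Pointwise

def NonFoldableSubset {G : Type*} [Group G] (L : Set G) : Prop :=
  ∀ (X : Type*) [MulAction G X] [Nonempty X] [FaithfulSMul G X],
    ∀ s : Set G, s ⊆ L → s.Finite → ∃ x : X, Set.InjOn (fun g : G => g • x) s

namespace Subgroup

variable {Γ : Type*} [Group Γ]

theorem commutatorElement_pow_right_of_mem_center {x y : Γ} (h : ⁅x, y⁆ ∈ center Γ) (j : ℕ) :
    ⁅x, y ^ j⁆ = ⁅x, y⁆ ^ j := by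
  induction j with
  | zero => simp
  | succ j ih =>
    rw [pow_succ, commutatorElement_mul_right_eq_mul_conj, ih, mul_assoc _ (y ^ j),
      mem_center_iff.1 h (y ^ j), ← mul_assoc, mul_inv_cancel_right, pow_succ]

theorem commutatorElement_pow_pow_of_mem_center {x y : Γ} (h : ⁅x, y⁆ ∈ center Γ) (i j : ℕ) :
    ⁅x ^ i, y ^ j⁆ = ⁅x, y⁆ ^ (i * j) := by
  have hj : ⁅y ^ j, x⁆ ∈ center Γ := by
    rw [← commutatorElement_inv, commutatorElement_pow_right_of_mem_center h]
    exact inv_mem (pow_mem h j)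
  rw [← commutatorElement_inv, commutatorElement_pow_right_of_mem_center hj,
    ← commutatorElement_inv, commutatorElement_pow_right_of_mem_center h, inv_pow, inv_inv,
    ← pow_mul, mul_comm]

theorem commutatorElement_mul_mul_eq_of_mem_center {x y z w : Γ} (hz : z ∈ center Γ)
    (hw : w ∈ center Γ) : ⁅x * z, y * w⁆ = ⁅x, y⁆ := by
  have hzc : ⁅z, y * w⁆ = 1 := commutatorElement_eq_one_iff_commute.2 (mem_center_iff.1 hz _).symm
  have hwc : ⁅x, w⁆ = 1 := commutatorElement_eq_one_iff_commute.2 (mem_center_iff.1 hw _)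
  rw [commutatorElement_mul_left_eq_conj_mul, hzc, mul_one, mul_inv_cancel, one_mul,
    commutatorElement_mul_right_eq_mul_conj, hwc, mul_one, mul_inv_cancel_right]

theorem commutatorElement_mem {M : Subgroup Γ} {x y : Γ} (hx : x ∈ M) (hy : y ∈ M) :
    ⁅x, y⁆ ∈ M := by
  rw [commutatorElement_def]
  exact mul_mem (mul_mem (mul_mem hx hy) (inv_mem hx)) (inv_mem hy)

theorem normal_of_le_center {H : Subgroup Γ} (h : H ≤ center Γ) : H.Normal :=
  ⟨fun n hn g => by rw [mem_center_iff.1 (h hn) g, mul_inv_cancel_right]; exact hn⟩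

theorem exists_pow_mem_of_mem_commutator {A M : Subgroup Γ} (hA : ⁅A, ⊤⁆ ≤ center Γ)
    (h : ∀ g, ∃ j, 0 < j ∧ g ^ j ∈ M ⊔ ⁅A, (⊤ : Subgroup Γ)⁆) {c : Γ}
    (hc : c ∈ ⁅A, (⊤ : Subgroup Γ)⁆) : ∃ i, 0 < i ∧ c ^ i ∈ M := by
  have := normal_of_le_center hA
  rw [commutator_def] at hc
  induction hc using closure_induction with
  | mem c hc =>
    -- `p ^ a = m₁ z₁` and `q ^ b = m₂ z₂` with `zᵢ` central give `⁅p, q⁆ ^ (a * b) = ⁅m₁, m₂⁆`.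
    obtain ⟨p, hp, q, -, rfl⟩ := hc
    obtain ⟨a, ha, hpa⟩ := h p
    obtain ⟨b, hb, hqb⟩ := h q
    obtain ⟨m₁, hm₁, z₁, hz₁, hpa⟩ := mem_sup_of_normal_right.1 hpa
    obtain ⟨m₂, hm₂, z₂, hz₂, hqb⟩ := mem_sup_of_normal_right.1 hqb
    refine ⟨a * b, Nat.mul_pos ha hb, ?_⟩
    rw [← commutatorElement_pow_pow_of_mem_center
        (hA (commutator_mem_commutator hp (mem_top q))),
      ← hpa, ← hqb, commutatorElement_mul_mul_eq_of_mem_center (hA hz₁) (hA hz₂)]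
    exact commutatorElement_mem hm₁ hm₂
  | one => exact ⟨1, one_pos, by simp⟩
  | mul x y hx hy ihx ihy =>
    obtain ⟨i, hi, hxi⟩ := ihx
    obtain ⟨j, hj, hyj⟩ := ihy
    refine ⟨i * j, Nat.mul_pos hi hj, ?_⟩
    rw [Commute.mul_pow (mem_center_iff.1 (hA hy) x), pow_mul, mul_comm i, pow_mul]
    exact mul_mem (pow_mem hxi j) (pow_mem hyj i)
  | inv x hx ihx =>
    obtain ⟨i, hi, hxi⟩ := ihx
    exact ⟨i, hi, by rw [inv_pow]; exact inv_mem hxi⟩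

theorem exists_pow_mem_of_exists_pow_mem_sup_commutator {A M : Subgroup Γ}
    (hA : ⁅A, ⊤⁆ ≤ center Γ) (h : ∀ g, ∃ j, 0 < j ∧ g ^ j ∈ M ⊔ ⁅A, (⊤ : Subgroup Γ)⁆) (g : Γ) :
    ∃ j, 0 < j ∧ g ^ j ∈ M := by
  have := normal_of_le_center hA
  obtain ⟨j, hj, hgj⟩ := h g
  obtain ⟨m, hm, c, hc, hmc⟩ := mem_sup_of_normal_right.1 hgj
  obtain ⟨i, hi, hci⟩ := exists_pow_mem_of_mem_commutator hA h hc
  refine ⟨j * i, Nat.mul_pos hj hi, ?_⟩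
  rw [pow_mul, ← hmc, Commute.mul_pow (mem_center_iff.1 (hA hc) m)]
  exact mul_mem (pow_mem hm i) hci

theorem mem_sup_ker_iff {Γ' : Type*} [Group Γ'] (f : Γ →* Γ') {M : Subgroup Γ} {g : Γ} :
    g ∈ M ⊔ f.ker ↔ f g ∈ M.map f := by
  rw [← mem_comap, comap_map_eq]

theorem exists_pow_mem_sup_lowerCentralSeries_succ {M : Subgroup Γ} {k : ℕ}
    (h : ∀ g, ∃ j, 0 < j ∧ g ^ j ∈ M ⊔ (⊤ : Subgroup Γ).lowerCentralSeries (k + 1)) (g : Γ) :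
    ∃ j, 0 < j ∧ g ^ j ∈ M ⊔ (⊤ : Subgroup Γ).lowerCentralSeries (k + 2) := by
  set K := (⊤ : Subgroup Γ).lowerCentralSeries (k + 2)
  set π := QuotientGroup.mk' K
  have hπ : Function.Surjective π := QuotientGroup.mk'_surjective K
  have hmap : ∀ n, ((⊤ : Subgroup Γ).lowerCentralSeries (n + 1)).map π =
      ⁅((⊤ : Subgroup Γ).lowerCentralSeries n).map π, ⊤⁆ := fun n => by
    rw [lowerCentralSeries_succ ⊤ n, map_commutator, map_top_of_surjective π hπ]
  have hcent : ⁅((⊤ : Subgroup Γ).lowerCentralSeries k).map π, ⊤⁆ ≤ center (Γ ⧸ K) := by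
    rw [← hmap, ← centralizer_univ, ← coe_top, ← commutator_eq_bot_iff_le_centralizer, ← hmap]
    exact QuotientGroup.map_mk'_self K
  obtain ⟨j, hj, hgj⟩ := exists_pow_mem_of_exists_pow_mem_sup_commutator hcent (M := M.map π)
    (fun q => by
      obtain ⟨g, rfl⟩ := hπ q
      obtain ⟨j, hj, hgj⟩ := h g
      exact ⟨j, hj, by rw [← hmap, ← map_sup, ← map_pow]; exact mem_map_of_mem π hgj⟩) (π g)
  exact ⟨j, hj, QuotientGroup.ker_mk' K ▸ (mem_sup_ker_iff π).2 (by rwa [map_pow])⟩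

end Subgroup

theorem Group.IsNilpotent.exists_pow_mem {Γ : Type*} [Group Γ] [Group.IsNilpotent Γ]
    {M : Subgroup Γ} (h : ∀ g, ∃ j, 0 < j ∧ g ^ j ∈ M ⊔ commutator Γ) (g : Γ) :
    ∃ j, 0 < j ∧ g ^ j ∈ M := by
  have hk : ∀ k g, ∃ j, 0 < j ∧ g ^ j ∈ M ⊔ (⊤ : Subgroup Γ).lowerCentralSeries (k + 1) := by
    intro k
    induction k with
    | zero => simpa only [zero_add, Subgroup.top_lowerCentralSeries_one] using h
    | succ k ih => exact Subgroup.exists_pow_mem_sup_lowerCentralSeries_succ ih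
  obtain ⟨n, hn⟩ := Subgroup.nilpotent_iff_lowerCentralSeries.1 ‹_›
  have hbot : (⊤ : Subgroup Γ).lowerCentralSeries (n + 1) = ⊥ :=
    eq_bot_iff.2 (hn ▸ Subgroup.lowerCentralSeries_antitone _ n.le_succ)
  simpa only [hbot, sup_bot_eq] using hk n g

section AdditiveMap

variable {Γ V : Type*} [Group Γ] [AddCommGroup V] {ι : Γ → V}

theorem map_zpow_of_map_mul (hι : ∀ a b, ι (a * b) = ι a + ι b) (g : Γ) (k : ℤ) :
    ι (g ^ k) = k • ι g :=
  map_zsmul (AddMonoidHom.mk' (fun a : Additive Γ => ι a.toMul) hι) k (Additive.ofMul g)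

theorem map_pow_of_map_mul (hι : ∀ a b, ι (a * b) = ι a + ι b) (g : Γ) (k : ℕ) :
    ι (g ^ k) = k • ι g := by
  simpa using map_zpow_of_map_mul hι g k

theorem not_isOfFinOrder_of_map_ne_zero [Module ℚ V] (hι : ∀ a b, ι (a * b) = ι a + ι b)
    {g : Γ} (hg : ι g ≠ 0) : ¬ IsOfFinOrder g := by
  intro h
  obtain ⟨n, hn, hgn⟩ := isOfFinOrder_iff_pow_eq_one.1 h
  have h0 : (n : ℚ) • ι g = 0 := by
    rw [Nat.cast_smul_eq_nsmul, ← map_pow_of_map_mul hι, hgn, ← pow_zero g,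
      map_pow_of_map_mul hι, zero_smul]
  exact hg ((smul_eq_zero.1 h0).resolve_left (Nat.cast_ne_zero.2 hn.ne'))

theorem exists_nsmul_eq_of_mem_span [Module ℚ V] (hι : ∀ a b, ι (a * b) = ι a + ι b)
    {M : Subgroup Γ} {v : V} (hv : v ∈ Submodule.span ℚ (ι '' M)) :
    ∃ j : ℕ, 0 < j ∧ ∃ m ∈ M, j • v = ι m := by
  induction hv using Submodule.span_induction with
  | mem v hv =>
    obtain ⟨m, hm, rfl⟩ := hv
    exact ⟨1, one_pos, m, hm, one_smul ℕ _⟩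
  | zero => exact ⟨1, one_pos, 1, one_mem M, by simpa using (map_pow_of_map_mul hι 1 0).symm⟩
  | add v w _ _ hv hw =>
    obtain ⟨i, hi, m, hm, hvm⟩ := hv
    obtain ⟨j, hj, n, hn, hwn⟩ := hw
    refine ⟨i * j, Nat.mul_pos hi hj, m ^ j * n ^ i, mul_mem (pow_mem hm j) (pow_mem hn i), ?_⟩
    rw [hι, map_pow_of_map_mul hι, map_pow_of_map_mul hι, ← hvm, ← hwn, smul_add, smul_smul,
      smul_smul, mul_comm j i]
  | smul q v _ hv =>
    obtain ⟨j, hj, m, hm, hvm⟩ := hv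
    refine ⟨j * q.den, Nat.mul_pos hj q.pos, m ^ q.num, zpow_mem hm _, ?_⟩
    rw [map_zpow_of_map_mul hι, ← hvm, ← Nat.cast_smul_eq_nsmul ℚ, ← Nat.cast_smul_eq_nsmul ℚ,
      ← Int.cast_smul_eq_zsmul ℚ, smul_smul, smul_smul, ← Rat.mul_den_eq_num]
    push_cast
    ring_nf

theorem exists_pow_mem_sup_commutator_of_span_eq_top [Module ℚ V]
    (hι : ∀ a b, ι (a * b) = ι a + ι b)
    (hker : ∀ g, ι g = 0 → ∃ j, 0 < j ∧ g ^ j ∈ commutator Γ) {M : Subgroup Γ}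
    (hM : Submodule.span ℚ (ι '' M) = ⊤) (g : Γ) : ∃ j, 0 < j ∧ g ^ j ∈ M ⊔ commutator Γ := by
  obtain ⟨j, hj, m, hm, hgm⟩ := exists_nsmul_eq_of_mem_span hι (hM ▸ Submodule.mem_top (x := ι g))
  have hι0 : ι (g ^ j * m⁻¹) = 0 := by
    rw [hι, map_pow_of_map_mul hι, ← zpow_neg_one, map_zpow_of_map_mul hι, hgm, neg_one_zsmul,
      add_neg_cancel]
  obtain ⟨i, hi, hgmi⟩ := hker _ hι0
  refine ⟨j * i, Nat.mul_pos hj hi, Abelianization.ker_of Γ ▸ (Subgroup.mem_sup_ker_iff _).2 ?_⟩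
  rw [← Abelianization.ker_of, MonoidHom.mem_ker, map_pow, map_mul, map_inv, mul_pow, inv_pow,
    mul_inv_eq_one] at hgmi
  exact ⟨m ^ i, pow_mem hm i, by rw [map_pow, ← hgmi, ← map_pow, ← pow_mul]⟩

end AdditiveMap

section IrreducibleOn

variable {R T : Type*} [Ring R] [AddCommGroup T] [Module R T]

/-- The linear analogue of Zariski irreducibility of `O ∩ E`. -/
def IsIrreducibleOn (O : Set T) (E : Submodule R T) : Prop :=
  ∀ 𝒵 : Set (Submodule R T), 𝒵.Finite → (∀ Z ∈ 𝒵, Z < E) → ¬ O ∩ E ⊆ ⋃ Z ∈ 𝒵, (Z : Set T)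

variable {O : Set T} {E : Submodule R T}

theorem IsIrreducibleOn.nonempty (h : IsIrreducibleOn O E) : (O ∩ E).Nonempty :=
  Set.nonempty_iff_ne_empty.2 fun h0 => h ∅ Set.finite_empty (by simp) (by simp [h0])

theorem IsIrreducibleOn.exists_le_of_subset_biUnion (h : IsIrreducibleOn O E)
    {𝒮 : Set (Submodule R T)} (h𝒮 : 𝒮.Finite) (hcov : O ⊆ ⋃ S ∈ 𝒮, (S : Set T)) :
    ∃ S ∈ 𝒮, E ≤ S := by
  by_contra! hnot
  refine h ((· ⊓ E) '' 𝒮) (h𝒮.image _) ?_ fun x hx => ?_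
  · rintro _ ⟨S, hS, rfl⟩
    exact inf_le_right.lt_of_ne fun hSE => hnot S hS (hSE ▸ inf_le_left)
  · obtain ⟨S, hS, hxS⟩ := Set.mem_iUnion₂.1 (hcov hx.1)
    exact Set.mem_biUnion (Set.mem_image_of_mem _ hS) ⟨hxS, hx.2⟩

theorem exists_finite_isIrreducibleOn_cover [IsArtinian R T] (O : Set T) (W : Submodule R T) :
    ∃ 𝒮 : Set (Submodule R T), 𝒮.Finite ∧ (∀ E ∈ 𝒮, IsIrreducibleOn O E) ∧
      O ∩ W ⊆ ⋃ E ∈ 𝒮, (E : Set T) := by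
  induction W using WellFoundedLT.induction with
  | _ W IH =>
  by_cases hW : IsIrreducibleOn O W
  · exact ⟨{W}, Set.finite_singleton W, by simpa using hW, fun x hx => by simpa using hx.2⟩
  simp only [IsIrreducibleOn, not_forall, not_not] at hW
  obtain ⟨𝒵, h𝒵, hlt, hcov⟩ := hW
  choose! 𝒮 h𝒮 hirr h𝒮cov using fun Z (hZ : Z ∈ 𝒵) => IH Z (hlt Z hZ)
  refine ⟨⋃ Z ∈ 𝒵, 𝒮 Z, h𝒵.biUnion h𝒮, ?_, fun x hx => ?_⟩
  · simp only [Set.mem_iUnion]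
    rintro E ⟨Z, hZ, hE⟩
    exact hirr Z hZ E hE
  · obtain ⟨Z, hZ, hxZ⟩ := Set.mem_iUnion₂.1 (hcov hx)
    obtain ⟨E, hE, hxE⟩ := Set.mem_iUnion₂.1 (h𝒮cov Z hZ ⟨hx.1, hxZ⟩)
    exact Set.mem_biUnion (Set.mem_biUnion hZ hE) hxE

variable {G : Type*} [Group G] [DistribMulAction G T] [SMulCommClass G R T]

theorem Submodule.pointwise_smul_le_pointwise_smul_iff {g : G} {S S' : Submodule R T} :
    g • S ≤ g • S' ↔ S ≤ S' := by
  rw [← SetLike.coe_subset_coe, Submodule.coe_pointwise_smul, Submodule.coe_pointwise_smul,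
    Set.smul_set_subset_smul_set_iff, SetLike.coe_subset_coe]

theorem Submodule.pointwise_smul_lt_pointwise_smul_iff {g : G} {S S' : Submodule R T} :
    g • S < g • S' ↔ S < S' := by
  simp only [lt_iff_le_not_ge, Submodule.pointwise_smul_le_pointwise_smul_iff]

theorem IsIrreducibleOn.smul (h : IsIrreducibleOn O E) (g : G) :
    IsIrreducibleOn (g • O) (g • E) := by
  intro 𝒵 h𝒵 hlt hcov
  refine h ((g⁻¹ • ·) '' 𝒵) (h𝒵.image _) ?_ fun x hx => ?_
  · rintro _ ⟨Z, hZ, rfl⟩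
    simpa using (Submodule.pointwise_smul_lt_pointwise_smul_iff (g := g⁻¹)).2 (hlt Z hZ)
  · obtain ⟨Z, hZ, hxZ⟩ := Set.mem_iUnion₂.1 (hcov ⟨Set.smul_mem_smul_set hx.1,
      Submodule.smul_mem_pointwise_smul x g E hx.2⟩)
    refine Set.mem_biUnion (Set.mem_image_of_mem _ hZ) ?_
    exact inv_smul_smul g x ▸ Submodule.smul_mem_pointwise_smul _ g⁻¹ Z hxZ

theorem Maximal.smul_isIrreducibleOn (hGO : ∀ g : G, g • O = O)
    (h : Maximal (IsIrreducibleOn O) E) (g : G) : Maximal (IsIrreducibleOn O) (g • E) := by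
  refine ⟨hGO g ▸ h.prop.smul g, fun W hW hle => ?_⟩
  have hle' : E ≤ g⁻¹ • W := by
    simpa using (Submodule.pointwise_smul_le_pointwise_smul_iff (g := g⁻¹)).2 hle
  simpa using (Submodule.pointwise_smul_le_pointwise_smul_iff (g := g)).2
    (h.le_of_ge (hGO g⁻¹ ▸ hW.smul g⁻¹) hle')

variable [IsArtinian R T]

theorem finite_setOf_maximal_isIrreducibleOn (O : Set T) :
    {E : Submodule R T | Maximal (IsIrreducibleOn O) E}.Finite := by
  obtain ⟨𝒮, h𝒮, hirr, hcov⟩ := exists_finite_isIrreducibleOn_cover O (⊤ : Submodule R T)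
  refine h𝒮.subset fun E hE => ?_
  obtain ⟨S, hS, hES⟩ := hE.prop.exists_le_of_subset_biUnion h𝒮 fun x hx => hcov ⟨hx, trivial⟩
  exact hE.eq_of_ge (hirr S hS) hES ▸ hS

theorem exists_maximal_isIrreducibleOn (hO : O.Nonempty) :
    ∃ E : Submodule R T, Maximal (IsIrreducibleOn O) E := by
  obtain ⟨𝒮, h𝒮, hirr, hcov⟩ := exists_finite_isIrreducibleOn_cover O (⊤ : Submodule R T)
  have hcov' : O ⊆ ⋃ E ∈ 𝒮, (E : Set T) := fun x hx => hcov ⟨hx, trivial⟩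
  obtain ⟨x, hx⟩ := hO
  obtain ⟨S₀, hS₀, -⟩ := Set.mem_iUnion₂.1 (hcov' hx)
  obtain ⟨E, -, hE⟩ := h𝒮.exists_le_maximal hS₀
  refine ⟨E, hirr E hE.prop, fun W hW hEW => ?_⟩
  obtain ⟨S, hS, hWS⟩ := hW.exists_le_of_subset_biUnion h𝒮 hcov'
  exact hWS.trans (hE.le_of_ge hS (hEW.trans hWS))

theorem exists_isIrreducibleOn_finiteIndex_stabilizer (hO : O.Nonempty)
    (hGO : ∀ g : G, g • O = O) :
    ∃ E : Submodule R T, IsIrreducibleOn O E ∧ (MulAction.stabilizer G E).FiniteIndex := by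
  obtain ⟨E, hE⟩ := exists_maximal_isIrreducibleOn (R := R) hO
  have horbit : (MulAction.orbit G E).Finite := (finite_setOf_maximal_isIrreducibleOn O).subset
    fun _ ⟨g, hg⟩ => hg ▸ hE.smul_isIrreducibleOn hGO g
  refine ⟨E, hE.prop, ⟨?_⟩⟩
  rw [MulAction.index_stabilizer]
  exact ((Set.ncard_pos horbit).2 ⟨E, MulAction.mem_orbit_self E⟩).ne'

end IrreducibleOn

section StronglyIrreducible

variable {G K V : Type*} [Group G] [Ring K] [AddCommGroup V] [Module K V]

def IsStronglyIrreducible (ρ : G →* (V ≃ₗ[K] V)) : Prop :=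
  ∀ H : Subgroup G, H.FiniteIndex → ∀ W : Submodule K V,
    (∀ g ∈ H, ∀ v ∈ W, ρ g v ∈ W) → W = ⊥ ∨ W = ⊤

theorem IsStronglyIrreducible.exists_forall_apply_notMem [IsArtinian K V]
    {ρ : G →* (V ≃ₗ[K] V)} (hρ : IsStronglyIrreducible ρ) {I : Type*} [Finite I] {v : I → V}
    (hv : ∀ i, v i ≠ 0) {W : Submodule K V} (hW : W ≠ ⊤) : ∃ g, ∀ i, ρ g (v i) ∉ W := by
  by_contra! hcov
  -- Move the `v i` together, in `I → V`: `hcov` says that the orbit of `v` is covered by the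
  -- finitely many proper subspaces `{w | w i ∈ W}`.
  let _ : DistribMulAction G V := DistribMulAction.compHom V ρ
  have : SMulCommClass G K V := ⟨fun g c x => (ρ g).map_smul c x⟩
  let O : Set (I → V) := Set.range fun g : G => g • v
  have hGO : ∀ g : G, g • O = O := fun g => by
    rw [Set.smul_set_range]
    simp_rw [smul_smul]
    exact (mul_left_surjective g).range_comp fun h => h • v
  obtain ⟨E, hE, hfin⟩ :=
    exists_isIrreducibleOn_finiteIndex_stabilizer (R := K) (O := O) ⟨v, 1, one_smul G v⟩ hGO
  obtain ⟨_, ⟨i, rfl⟩, hEi⟩ := hE.exists_le_of_subset_biUnion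
    (Set.finite_range fun i => W.comap (LinearMap.proj i)) fun w ⟨g, hg⟩ => by
      obtain ⟨i, hi⟩ := hcov g
      exact Set.mem_biUnion ⟨i, rfl⟩ (hg ▸ hi)
  obtain ⟨_, ⟨g, rfl⟩, hgE⟩ := hE.nonempty
  have hinv : ∀ h ∈ MulAction.stabilizer G E, ∀ x ∈ E.map (LinearMap.proj i),
      ρ h x ∈ E.map (LinearMap.proj i) := by
    rintro h hh _ ⟨w, hw, rfl⟩
    exact ⟨h • w, hh ▸ Submodule.smul_mem_pointwise_smul w h E hw, rfl⟩
  rcases hρ _ hfin _ hinv with hbot | htop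
  · exact hv i ((ρ g).map_eq_zero_iff.1 ((Submodule.mem_bot K).1 (hbot ▸ ⟨_, hgE, rfl⟩)))
  · exact hW (top_unique (htop ▸ Submodule.map_le_iff_le_comap.2 hEi))

theorem IsStronglyIrreducible.span_eq_top [IsArtinian K V] {ρ : G →* (V ≃ₗ[K] V)}
    (hρ : IsStronglyIrreducible ρ) {I : Type*} [Finite I] {v : I → V} (hv : ∀ i, v i ≠ 0)
    {S : Set V} (hS : ∀ g, ∃ i, ρ g (v i) ∈ S) : Submodule.span K S = ⊤ := by
  by_contra hW
  obtain ⟨g, hg⟩ := hρ.exists_forall_apply_notMem hv hW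
  obtain ⟨i, hi⟩ := hS g
  exact hg i (Submodule.subset_span hi)

end StronglyIrreducible

def Subgroup.liminf {G ι : Type*} [Group G] (l : Filter ι) (H : ι → Subgroup G) :
    Subgroup G where
  carrier := {g | ∀ᶠ i in l, g ∈ H i}
  mul_mem' ha hb := (ha.and hb).mono fun _ h => mul_mem h.1 h.2
  one_mem' := Filter.Eventually.of_forall fun i => one_mem (H i)
  inv_mem' ha := ha.mono fun _ h => inv_mem h

section GSet

variable {G X : Type*} [Group G] [MulAction G X]

theorem exists_mem_offDiag_smul_eq_of_not_injOn {s : Set G} {x : X}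
    (h : ¬ Set.InjOn (· • x) s) : ∃ p ∈ s.offDiag, (p.2⁻¹ * p.1) • x = x := by
  simp only [Set.InjOn, not_forall] at h
  obtain ⟨a, ha, b, hb, hab, hne⟩ := h
  exact ⟨(a, b), ⟨ha, hb, hne⟩, by rw [mul_smul, hab, inv_smul_smul]⟩

theorem exists_subgroup_conj_mem_and_pow_notMem [FaithfulSMul G X] {I : Type*} [Finite I]
    (d : I → G) (hfix : ∀ x : X, ∃ i, d i • x = x) {a : G} (ha : ¬ IsOfFinOrder a) :
    ∃ H : Subgroup G, (∀ g, ∃ i, g * d i * g⁻¹ ∈ H) ∧ ∀ j, 0 < j → a ^ j ∉ H := by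
  have hmoved : ∀ k : ℕ, ∃ x : X, a ^ k.factorial • x ≠ x := fun k => by
    by_contra! h
    exact ha (isOfFinOrder_iff_pow_eq_one.2
      ⟨k.factorial, k.factorial_pos, eq_of_smul_eq_smul fun x => by rw [h x, one_smul]⟩)
  -- As `j ∣ k !` for `k ≥ j > 0`, a fixed `a ^ j` fixes `x k` for only finitely many `k`.
  choose x hx using hmoved
  let 𝒰 := Ultrafilter.of (Filter.atTop : Filter ℕ)
  refine ⟨Subgroup.liminf 𝒰 fun k => MulAction.stabilizer G (x k), fun g => ?_,
    fun j hj hmem => ?_⟩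
  · refine Ultrafilter.eventually_exists_iff.1 (Filter.Eventually.of_forall fun k => ?_)
    obtain ⟨i, hi⟩ := hfix (g⁻¹ • x k)
    exact ⟨i, by simp [MulAction.mem_stabilizer_iff, mul_smul, hi]⟩
  · obtain ⟨k, hk, hjk⟩ := (Filter.Eventually.and hmem
      (Ultrafilter.of_le _ (Filter.eventually_ge_atTop j))).exists
    obtain ⟨c, hc⟩ := Nat.dvd_factorial hj hjk
    exact hx k (by rw [hc, pow_mul]; exact pow_mem hk c)

end GSet

theorem strongly_irreducible_extension_nonfoldable_general (G : Type*) [Group G]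
    (N : Subgroup G) [hN : N.Normal] [Group.IsNilpotent ↥N]
    (V : Type*) [AddCommGroup V] [Module ℚ V] [FiniteDimensional ℚ V]
    (ι : ↥N → V)
    (hι : ∀ a b : ↥N, ι (a * b) = ι a + ι b)
    (hker : ∀ m : ↥N, ι m = 0 ↔ ∃ j : ℕ, 0 < j ∧ m ^ j ∈ commutator ↥N)
    (ρ : G →* (V ≃ₗ[ℚ] V))
    (hρconj : ∀ (g : G) (m : ↥N),
      ρ g (ι m) = ι ⟨g * ↑m * g⁻¹, hN.conj_mem ↑m m.2 g⟩)
    (hsi : ∀ H : Subgroup G, H.FiniteIndex → ∀ W : Submodule ℚ V,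
      (∀ g ∈ H, ∀ v ∈ W, ρ g v ∈ W) → W = ⊥ ∨ W = ⊤)
    (L : Set G) (hLN : L ⊆ ↑N)
    (hLinj : ∀ (a : G) (ha : a ∈ L) (b : G) (hb : b ∈ L),
      ι ⟨a, hLN ha⟩ = ι ⟨b, hLN hb⟩ → a = b) :
    NonFoldableSubset L := by
  intro X _ _ _ s hsL hsfin
  by_contra! hfold
  have : Finite s.offDiag := hsfin.offDiag.to_subtype
  let d : s.offDiag → N := fun p =>
    ⟨(p.1.2)⁻¹ * p.1.1, mul_mem (inv_mem (hLN (hsL p.2.2.1))) (hLN (hsL p.2.1))⟩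
  have hdι : ∀ p, ι (d p) ≠ 0 := fun p h0 =>
    p.2.2.2.symm <| hLinj _ (hsL p.2.2.1) _ (hsL p.2.1) <| by
      rw [← add_zero (ι _), ← h0, ← hι]
      exact congrArg ι (Subtype.ext (mul_inv_cancel_left _ _))
  have hfix : ∀ x : X, ∃ p, (d p : G) • x = x := fun x => by
    obtain ⟨p, hp, hpx⟩ := exists_mem_offDiag_smul_eq_of_not_injOn (hfold x)
    exact ⟨⟨p, hp⟩, hpx⟩
  obtain ⟨p₀, -⟩ := hfix (Classical.arbitrary X)
  have hinf : ¬ IsOfFinOrder (d p₀ : G) := by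
    rw [← orderOf_eq_zero_iff, Subgroup.orderOf_coe, orderOf_eq_zero_iff]
    exact not_isOfFinOrder_of_map_ne_zero hι (hdι p₀)
  obtain ⟨H, hHconj, hHpow⟩ := exists_subgroup_conj_mem_and_pow_notMem _ hfix hinf
  have hspan : Submodule.span ℚ (ι '' H.comap N.subtype) = ⊤ :=
    IsStronglyIrreducible.span_eq_top hsi hdι fun g =>
      (hHconj g).imp fun p hp => hρconj g (d p) ▸ ⟨_, hp, rfl⟩
  obtain ⟨j, hj, hjH⟩ := Group.IsNilpotent.exists_pow_mem
    (exists_pow_mem_sup_commutator_of_span_eq_top hι (fun m => (hker m).1) hspan) (d p₀)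
  exact hHpow j hj hjH

/-- Let `G` be a group with a nilpotent normal subgroup `N`, and let
`V = N^{ab} ⊗ ℚ` be nonzero and finite dimensional (encoded by the additive map `ι : N → V`
whose image spans `V` and whose kernel consists of the elements having a positive power in
`[N,N]`). Let `ρ` be the representation of `G` on `V` induced by conjugation (it kills `N`,
hence factors through `Q = G/N`), and assume it is strongly irreducible: for every
finite-index subgroup, the only invariant subspaces are `0` and `V`. If `L ⊆ N` maps
injectively to `N^{ab}/T(N^{ab})` (equivalently, `ι` is injective on `L`), then `L` is a
non-foldable subset of `G`. -/
theorem strongly_irreducible_extension_nonfoldable (G : Type*) [Group G]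
    (N : Subgroup G) [hN : N.Normal] [Group.IsNilpotent ↥N]
    (V : Type*) [AddCommGroup V] [Module ℚ V] [FiniteDimensional ℚ V] [Nontrivial V]
    (ι : ↥N → V)
    (hι : ∀ a b : ↥N, ι (a * b) = ι a + ι b)
    (hspan : Submodule.span ℚ (Set.range ι) = ⊤)
    (hker : ∀ m : ↥N, ι m = 0 ↔ ∃ j : ℕ, 0 < j ∧ m ^ j ∈ commutator ↥N)
    (ρ : G →* (V ≃ₗ[ℚ] V))
    (hρN : ∀ m : ↥N, ρ ↑m = 1)
    (hρconj : ∀ (g : G) (m : ↥N),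
      ρ g (ι m) = ι ⟨g * ↑m * g⁻¹, hN.conj_mem ↑m m.2 g⟩)
    (hsi : ∀ H : Subgroup G, H.FiniteIndex → ∀ W : Submodule ℚ V,
      (∀ g ∈ H, ∀ v ∈ W, ρ g v ∈ W) → W = ⊥ ∨ W = ⊤)
    (L : Set G) (hLN : L ⊆ ↑N)
    (hLinj : ∀ (a : G) (ha : a ∈ L) (b : G) (hb : b ∈ L),
      ι ⟨a, hLN ha⟩ = ι ⟨b, hLN hb⟩ → a = b) :
    NonFoldableSubset L :=
  strongly_irreducible_extension_nonfoldable_general G N (hN := hN) V ι hι hker ρ hρconj hsi L hLN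
    hLinj
end

section
/- Let G be a group with an abelian normal subgroup M, and let π : G → G/M be the quotient map. Let P be a finite subset of G not containing the identity, with |P| = r, and let H be a subgroup of G such that for every m ∈ M the conjugate m H m⁻¹ intersects P (i.e., for every m ∈ M there is p ∈ P with m⁻¹ p m ∈ H). Then there exists g ∈ P such that π(g) ∈ π(H) and the set M_{g,H} = {m ∈ M : m g m⁻¹ g⁻¹ ∈ H} is a subgroup of M of index at most r in M. -/
/-!
Since `M` is abelian and normal, `m ↦ [m, p] = m p m⁻¹ p⁻¹` is a homomorphism `M → G`, and
`m⁻¹ p m ∈ H` exactly when `[m, p] ∈ p H`. So `{m ∈ M : m⁻¹ p m ∈ H}` is the preimage of a left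
coset: either empty or a left coset of `M_{p,H}`. The hypothesis says these `|P|` sets cover `M`,
and B. H. Neumann's lemma yields some `M_{g,H}` of index at most `|P|`, with the corresponding set
nonempty, i.e. some `M`-conjugate of `g` lies in `H`.
-/

open scoped Pointwise IsMulCommutative

namespace Subgroup

variable {G : Type*} [Group G]

theorem preimage_leftCoset_eq_of_mem {A : Type*} [Group A] (f : A →* G) (H : Subgroup G)
    {g : G} {a : A} (ha : f a ∈ g • (H : Set G)) :
    f ⁻¹' (g • (H : Set G)) = a • (H.comap f : Set A) := by
  rw [mem_leftCoset_iff, SetLike.mem_coe] at ha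
  ext x
  rw [Set.mem_preimage, mem_leftCoset_iff, mem_leftCoset_iff, SetLike.mem_coe, SetLike.mem_coe,
    mem_comap, map_mul, map_inv, ← mul_mem_cancel_left (inv_mem ha)]
  group

theorem exists_index_le_card_of_preimage_leftCoset_cover {ι A : Type*} [Group A] {s : Finset ι}
    {f : ι → A →* G} {g : ι → G} {H : ι → Subgroup G}
    (hcovers : ⋃ i ∈ s, f i ⁻¹' (g i • (H i : Set G)) = Set.univ) :
    ∃ i ∈ s, (f i ⁻¹' (g i • (H i : Set G))).Nonempty ∧
      ((H i).comap (f i)).FiniteIndex ∧ ((H i).comap (f i)).index ≤ s.card := by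
  classical
  set t := s.filter fun i => (f i ⁻¹' (g i • (H i : Set G))).Nonempty
  choose! a ha using fun i (hi : i ∈ t) => (Finset.mem_filter.mp hi).2
  have htcovers : ⋃ i ∈ t, a i • ((H i).comap (f i) : Set A) = Set.univ := by
    refine Set.eq_univ_of_forall fun x => ?_
    obtain ⟨i, hi, hx⟩ := Set.mem_iUnion₂.mp (hcovers ▸ Set.mem_univ x)
    have hit : i ∈ t := Finset.mem_filter.mpr ⟨hi, x, hx⟩
    rw [preimage_leftCoset_eq_of_mem _ _ (ha i hit)] at hx
    exact Set.mem_biUnion hit hx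
  obtain ⟨i, hit, hfin, hle⟩ := exists_index_le_card_of_leftCoset_cover htcovers
  obtain ⟨hi, hne⟩ := Finset.mem_filter.mp hit
  exact ⟨i, hi, hne, hfin, hle.trans (Finset.card_filter_le _ _)⟩

theorem relIndex_map_subtype {M : Subgroup G} (K : Subgroup M) :
    (K.map M.subtype).relIndex M = K.index := by
  rw [relIndex, subgroupOf, comap_map_eq_self_of_injective M.subtype_injective]

variable (M : Subgroup G) [M.Normal] [IsMulCommutative M]

def commutatorHom (g : G) : M →* G :=
  M.subtype.comp (MonoidHom.id M / (MulAut.conjNormal g).toMonoidHom)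

variable {M}

@[simp]
theorem commutatorHom_apply (g : G) (m : M) :
    commutatorHom M g m = m * g * (m : G)⁻¹ * g⁻¹ := by
  show ((m / MulAut.conjNormal g m : M) : G) = _
  rw [coe_div, MulAut.conjNormal_apply, div_eq_mul_inv]
  group

theorem inv_mul_mul_mem_iff_commutatorHom_mem (H : Subgroup G) (g : G) (m : M) :
    (m : G)⁻¹ * g * m ∈ H ↔ commutatorHom M g m ∈ g • (H : Set G) := by
  have h : g⁻¹ * commutatorHom M g m = ((m : G)⁻¹ * g * m)⁻¹ := by
    rw [← inv_inv (commutatorHom M g m), ← map_inv, commutatorHom_apply, coe_inv]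
    group
  rw [mem_leftCoset_iff, h, SetLike.mem_coe, inv_mem_iff]

end Subgroup

theorem confined_abelian_normal_neumann_general (G : Type*) [Group G]
    (M : Subgroup G) [M.Normal] (hM : ∀ a b : ↥M, a * b = b * a)
    (P : Finset G)
    (H : Subgroup G)
    (hconf : ∀ m ∈ M, ∃ p ∈ P, m⁻¹ * p * m ∈ H) :
    ∃ g ∈ P,
      (QuotientGroup.mk g : G ⧸ M) ∈ H.map (QuotientGroup.mk' M) ∧
      ∃ L : Subgroup G,
        (L : Set G) = {m : G | m ∈ M ∧ m * g * m⁻¹ * g⁻¹ ∈ H} ∧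
        L.relIndex M ≠ 0 ∧ L.relIndex M ≤ P.card := by
  have : IsMulCommutative M := isMulCommutative_iff.mpr hM
  have hcovers : ⋃ p ∈ P, M.commutatorHom p ⁻¹' (p • (H : Set G)) = Set.univ := by
    refine Set.eq_univ_of_forall fun m => Set.mem_iUnion₂.mpr ?_
    obtain ⟨p, hp, hmp⟩ := hconf m m.2
    exact ⟨p, hp, (Subgroup.inv_mul_mul_mem_iff_commutatorHom_mem H p m).mp hmp⟩
  obtain ⟨g, hg, ⟨m, hm⟩, hfin, hle⟩ :=
    Subgroup.exists_index_le_card_of_preimage_leftCoset_cover hcovers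
  refine ⟨g, hg, ⟨_, (Subgroup.inv_mul_mul_mem_iff_commutatorHom_mem H g m).mpr hm, ?_⟩,
    (H.comap (M.commutatorHom g)).map M.subtype, ?_, ?_, ?_⟩
  · simp [(QuotientGroup.eq_one_iff (m : G)).mpr m.2]
  · ext x
    simp [and_comm]
  · rw [Subgroup.relIndex_map_subtype]
    exact hfin.index_ne_zero
  · rwa [Subgroup.relIndex_map_subtype]

/-- Let `G` be a group with an abelian normal subgroup `M`, `π : G → G/M`,
`P` a finite subset of `G \ {1}`, and `H ≤ G` a subgroup such that every `M`-conjugate of `H`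
meets `P`. Then there is `g ∈ P` with `π g ∈ π(H)` such that
`M_{g,H} = {m ∈ M : [m,g] ∈ H}` is a subgroup of `M` of index at most `|P|` in `M`. -/
theorem confined_abelian_normal_neumann (G : Type*) [Group G]
    (M : Subgroup G) [M.Normal] (hM : ∀ a b : ↥M, a * b = b * a)
    (P : Finset G) (hP : (1 : G) ∉ P)
    (H : Subgroup G)
    (hconf : ∀ m ∈ M, ∃ p ∈ P, m⁻¹ * p * m ∈ H) :
    ∃ g ∈ P,
      (QuotientGroup.mk g : G ⧸ M) ∈ H.map (QuotientGroup.mk' M) ∧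
      ∃ L : Subgroup G,
        (L : Set G) = {m : G | m ∈ M ∧ m * g * m⁻¹ * g⁻¹ ∈ H} ∧
        L.relIndex M ≠ 0 ∧ L.relIndex M ≤ P.card :=
  confined_abelian_normal_neumann_general G M hM P H hconf
end
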